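/- arXiv:1506.06174 — 4 statements merged into one kernel-verified Lean document; each statement's English description precedes it below -/
import Mathlib

section
/- Let (M,d,μ) be a metric probability space. Then (1/(4√6)) · sup_f ‖f(x) − f(y)‖²_{ψ₂(μ ⊗ μ)} ≤ σ²(μ) ≤ 4 · sup_f ‖f(x) − f(y)‖²_{ψ₂(μ ⊗ μ)}, where both suprema run over all functions f : M → ℝ with Lipschitz semi-norm ‖f‖_Lip ≤ 1 (no mean-zero assumption), and f(x) − f(y) is viewed as a function on the product space (M × M, μ ⊗ μ). -/
open MeasureTheory Real Filter

/-- The ψ_α Orlicz-type norm of `f` with respect to `μ`: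
`inf { r > 0 : ∫ exp((|f|/r)^α) dμ ≤ 2 }`. -/
noncomputable def psiNorm {M : Type*} [MeasurableSpace M] (μ : Measure M) (α : ℝ)
    (f : M → ℝ) : ℝ :=
  sInf {r : ℝ | 0 < r ∧ ∫ x, Real.exp ((|f x| / r) ^ α) ∂μ ≤ 2}

/-- `σ2` is an admissible subgaussian bound for the metric probability space `(M,d,μ)`:
`∫ e^{tf} dμ ≤ e^{σ2 t²/2}` for all `t ∈ ℝ` and all `f` with `μ`-mean zero and
Lipschitz semi-norm at most 1. -/
def IsSubgaussianBound {M : Type*} [PseudoMetricSpace M] [MeasurableSpace M]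
    (μ : Measure M) (σ2 : ℝ) : Prop :=
  0 ≤ σ2 ∧ ∀ f : M → ℝ, LipschitzWith 1 f → (∫ x, f x ∂μ) = 0 →
    ∀ t : ℝ, ∫ x, Real.exp (t * f x) ∂μ ≤ Real.exp (σ2 * t ^ 2 / 2)

/-- The subgaussian constant `σ²(μ)` of a metric probability space. -/
noncomputable def subgaussianConst {M : Type*} [PseudoMetricSpace M] [MeasurableSpace M]
    (μ : Measure M) : ℝ :=
  sInf {σ2 : ℝ | IsSubgaussianBound μ σ2}

/-- The normalized restricted measure `μ_A`, viewed as a measure on the metric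
(sub)space `A`. -/
noncomputable def restrictedMeasure {M : Type*} [MeasurableSpace M] (μ : Measure M)
    (A : Set M) : Measure A :=
  (ProbabilityTheory.cond μ A).comap Subtype.val

/-!
Lower bound: if `σ²` is a subgaussian bound and `f` is `1`-Lipschitz, the centred `f` has moment
generating function at most `exp (σ² t² / 2)`, hence `f x - f y` has one at most `exp (σ² t²)`.
Writing `exp w²` as a Gaussian average of `exp (2 w z)` turns this into
`∫ exp ((f x - f y) / r)² ≤ 2` as soon as `r² ≥ 16 σ² / 3`, and `16 / 3 ≤ 4 √6`.

Upper bound: `f x - f y` is symmetric, so if its `ψ₂`-norm is below `r`, `cosh u ≤ exp (u² / 2)`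
bounds its moment generating function by `exp (t² r²)`. Since `∫ exp (-t f) ≥ 1` by Jensen, the
moment generating function of a centred `f` is at most that of `f x - f y`, which gives the
subgaussian bound `2 sup ‖f x - f y‖²_ψ₂`.

Measurability and integrability of `f` are not given, and `∫` and `psiNorm` take junk values on
non-integrable functions: measurability of `f` is recovered from that of `|f x - f y|`, the
`ψ₂`-bound is first applied to bounded truncations of `f`, and integrability comes from a slice of
the product integral.
-/

open scoped ENNReal Topology

lemma abs_le_mul_exp_sq {r : ℝ} (hr : 0 < r) (u : ℝ) : |u| ≤ r * exp ((u / r) ^ 2) := by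
  have h : |u| / r ≤ exp ((|u| / r) ^ 2) := by
    nlinarith [add_one_le_exp ((|u| / r) ^ 2), sq_nonneg (|u| / r - 1)]
  rwa [div_pow, sq_abs, ← div_pow, div_le_iff₀' hr] at h

lemma exp_mul_le_exp_mul_exp_sq {r : ℝ} (hr : 0 < r) (u w : ℝ) :
    exp (u * w) ≤ exp (u ^ 2 * r ^ 2 / 4) * exp ((w / r) ^ 2) := by
  rw [← exp_add, exp_le_exp]
  have h : u * r * (w / r) = u * w := by field_simp
  nlinarith [sq_nonneg (u * r / 2 - w / r)]

lemma abs_div_rpow_two (x r : ℝ) : (|x| / r) ^ (2 : ℝ) = (x / r) ^ 2 := by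
  rw [rpow_two, div_pow, sq_abs, div_pow]

lemma exp_mul_sub_sq_eq (b z : ℝ) :
    exp (b * z - z ^ 2) = exp (b ^ 2 / 4) * exp (-1 * (z - b / 2) ^ 2) := by
  rw [← exp_add]; ring_nf

lemma integral_exp_mul_sub_sq (b : ℝ) : ∫ z, exp (b * z - z ^ 2) = √π * exp (b ^ 2 / 4) := by
  simp_rw [exp_mul_sub_sq_eq b, integral_const_mul,
    integral_sub_right_eq_self (fun z => exp (-1 * z ^ 2)), integral_gaussian, div_one, mul_comm]

lemma lintegral_exp_mul_sub_sq (b : ℝ) :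
    ∫⁻ z, .ofReal (exp (b * z - z ^ 2)) = .ofReal (√π * exp (b ^ 2 / 4)) := by
  have hint : Integrable (fun z => exp (b * z - z ^ 2)) := by
    simp_rw [exp_mul_sub_sq_eq b]
    exact ((integrable_exp_neg_mul_sq one_pos).comp_sub_right (b / 2)).const_mul _
  rw [← integral_exp_mul_sub_sq, ofReal_integral_eq_lintegral_ofReal hint
    (ae_of_all _ fun _ => (exp_pos _).le)]

lemma lintegral_exp_neg_mul_sq {κ : ℝ} (hκ : 0 < κ) :
    ∫⁻ z, .ofReal (exp (-κ * z ^ 2)) = .ofReal √(π / κ) := by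
  rw [← integral_gaussian, ofReal_integral_eq_lintegral_ofReal (integrable_exp_neg_mul_sq hκ)
    (ae_of_all _ fun _ => (exp_pos _).le)]

section Measurability

variable {α : Type*} [MeasurableSpace α] {μ : Measure α}

lemma aemeasurable_abs_of_aemeasurable_exp_sq {g : α → ℝ} {r : ℝ} (hr : 0 < r)
    (h : AEMeasurable (fun x => exp ((g x / r) ^ 2)) μ) : AEMeasurable (fun x => |g x|) μ :=
  ((aemeasurable_of_aemeasurable_exp h).sqrt.const_mul r).congr <|
    ae_of_all _ fun x => by
      simp [sqrt_sq_eq_abs, abs_div, abs_of_pos hr, mul_div_cancel₀ _ hr.ne']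

/-- A function is recovered from its distances to two points where it takes different values:
`2 (a - b) f = a² - b² - |a - f|² + |b - f|²`; if there are no two such points, it is a.e.
constant. -/
lemma aemeasurable_of_ae_aemeasurable_abs_sub {f : α → ℝ}
    (h : ∀ᵐ x ∂μ, AEMeasurable (fun y => |f x - f y|) μ) : AEMeasurable f μ := by
  rcases eq_zero_or_neZero μ with rfl | _
  · exact aemeasurable_zero_measure
  by_cases hab : ∃ a b, AEMeasurable (fun y => |f a - f y|) μ ∧
      AEMeasurable (fun y => |f b - f y|) μ ∧ f a ≠ f b
  · obtain ⟨a, b, ha, hb, hne⟩ := hab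
    refine ((((ha.pow_const 2).sub (hb.pow_const 2)).const_sub (f a ^ 2 - f b ^ 2)).div_const
      (2 * (f a - f b))).congr (ae_of_all _ fun y => ?_)
    have : f a - f b ≠ 0 := sub_ne_zero.2 hne
    simp only [Pi.sub_apply, sq_abs]
    field_simp
    ring
  · push Not at hab
    obtain ⟨x₀, hx₀⟩ := h.exists
    exact aemeasurable_const.congr <| h.mono fun y hy => (hab y x₀ hy hx₀).symm

lemma aemeasurable_of_aemeasurable_abs_sub_prod [SFinite μ] {f : α → ℝ}
    (h : AEMeasurable (fun p : α × α => |f p.1 - f p.2|) (μ.prod μ)) : AEMeasurable f μ :=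
  aemeasurable_of_ae_aemeasurable_abs_sub <|
    h.aestronglyMeasurable.prodMk_left.mono fun _ hx => hx.aemeasurable

lemma AEMeasurable.sub_prod [SFinite μ] {f : α → ℝ} (hf : AEMeasurable f μ) :
    AEMeasurable (fun p : α × α => f p.1 - f p.2) (μ.prod μ) :=
  (hf.comp_quasiMeasurePreserving Measure.quasiMeasurePreserving_fst).sub
    (hf.comp_quasiMeasurePreserving Measure.quasiMeasurePreserving_snd)

end Measurability

section Integrability

variable {α : Type*} [MeasurableSpace α] {μ : Measure α}

lemma exists_lintegral_prodMk_ne_top {β : Type*} [MeasurableSpace β] {ν : Measure β} [SFinite ν]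
    [NeZero μ] {F : α × β → ℝ≥0∞} (hF : AEMeasurable F (μ.prod ν))
    (h : ∫⁻ p, F p ∂μ.prod ν ≠ ∞) : ∃ x, ∫⁻ y, F (x, y) ∂ν ≠ ∞ := by
  by_contra! hx
  simp [lintegral_prod F hF, hx, NeZero.ne μ] at h

lemma integrable_of_lintegral_exp_sq_sub_ne_top [IsFiniteMeasure μ] {f : α → ℝ}
    (hf : AEMeasurable f μ) {c r : ℝ} (hr : 0 < r)
    (h : ∫⁻ y, .ofReal (exp (((c - f y) / r) ^ 2)) ∂μ ≠ ∞) :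
    Integrable f μ ∧ ∀ u, Integrable (fun y => exp (u * f y)) μ := by
  have hφ : Integrable (fun y => exp (((c - f y) / r) ^ 2)) μ :=
    ⟨(by fun_prop : AEMeasurable _ μ).aestronglyMeasurable,
      (hasFiniteIntegral_iff_ofReal (ae_of_all _ fun _ => (exp_pos _).le)).2 h.lt_top⟩
  refine ⟨((hφ.const_mul r).add (integrable_const |c|)).mono' hf.aestronglyMeasurable
    (ae_of_all _ fun y => ?_), fun u => ?_⟩
  · have h1 := abs_le_mul_exp_sq hr (c - f y)
    have h2 : |f y| ≤ |c| + |c - f y| := by simpa using abs_sub c (c - f y)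
    rw [norm_eq_abs, Pi.add_apply]
    linarith
  · refine (hφ.const_mul (exp (u * c + u ^ 2 * r ^ 2 / 4))).mono'
      (by fun_prop : AEMeasurable _ μ).aestronglyMeasurable (ae_of_all _ fun y => ?_)
    rw [norm_of_nonneg (exp_pos _).le]
    calc exp (u * f y) = exp (u * c) * exp (-u * (c - f y)) := by rw [← exp_add]; ring_nf
      _ ≤ exp (u * c) * (exp ((-u) ^ 2 * r ^ 2 / 4) * exp (((c - f y) / r) ^ 2)) :=
        mul_le_mul_of_nonneg_left (exp_mul_le_exp_mul_exp_sq hr _ _) (exp_pos _).le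
      _ = exp (u * c + u ^ 2 * r ^ 2 / 4) * exp (((c - f y) / r) ^ 2) := by
        rw [neg_sq, exp_add, mul_assoc]

lemma integrable_of_lintegral_exp_sq_prod_ne_top [IsFiniteMeasure μ] [NeZero μ] {f : α → ℝ}
    (hf : AEMeasurable f μ) {r : ℝ} (hr : 0 < r)
    (h : ∫⁻ p, .ofReal (exp (((f p.1 - f p.2) / r) ^ 2)) ∂μ.prod μ ≠ ∞) :
    Integrable f μ ∧ ∀ u, Integrable (fun y => exp (u * f y)) μ := by
  obtain ⟨x, hx⟩ := exists_lintegral_prodMk_ne_top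
    (((hf.sub_prod.div_const r).pow_const 2).exp.ennreal_ofReal) h
  exact integrable_of_lintegral_exp_sq_sub_ne_top (c := f x) hf hr hx

end Integrability

section PsiNorm

variable {Ω : Type*} [MeasurableSpace Ω] {ν : Measure Ω} {g : Ω → ℝ} {r : ℝ}

lemma psiNorm_nonneg (ν : Measure Ω) (α : ℝ) (g : Ω → ℝ) : 0 ≤ psiNorm ν α g :=
  Real.sInf_nonneg fun _ hs => hs.1.le

lemma psiNorm_le_of_integral_le {α : ℝ} (hr : 0 < r)
    (h : ∫ x, exp ((|g x| / r) ^ α) ∂ν ≤ 2) : psiNorm ν α g ≤ r :=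
  csInf_le ⟨0, fun _ hs => hs.1.le⟩ ⟨hr, h⟩

lemma psiNorm_two_le_of_lintegral_le (hr : 0 < r) (hg : AEMeasurable g ν)
    (h : ∫⁻ x, .ofReal (exp ((g x / r) ^ 2)) ∂ν ≤ 2) : psiNorm ν 2 g ≤ r := by
  refine psiNorm_le_of_integral_le hr ?_
  simp_rw [abs_div_rpow_two]
  rw [integral_eq_lintegral_of_nonneg_ae (ae_of_all _ fun _ => (exp_pos _).le)
    (by fun_prop : AEMeasurable _ ν).aestronglyMeasurable]
  exact ENNReal.toReal_le_of_le_ofReal zero_le_two (by simpa using h)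

lemma lintegral_exp_sq_le_two_of_psiNorm_lt [IsProbabilityMeasure ν] (hg : AEMeasurable g ν)
    {C : ℝ} (hC : ∀ x, |g x| ≤ C) (h : psiNorm ν 2 g < r) :
    ∫⁻ x, .ofReal (exp ((g x / r) ^ 2)) ∂ν ≤ 2 := by
  have hpt : ∀ s x, exp ((g x / s) ^ 2) ≤ exp ((C / s) ^ 2) := fun s x => by
    rw [exp_le_exp, div_pow, div_pow]
    gcongr ?_ / _
    exact sq_le_sq' (abs_le.1 (hC x)).1 (abs_le.1 (hC x)).2
  have hint : ∀ s, Integrable (fun x => exp ((g x / s) ^ 2)) ν := fun s =>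
    (integrable_const _).mono' (by fun_prop : AEMeasurable _ ν).aestronglyMeasurable
      (ae_of_all _ fun x => (norm_of_nonneg (exp_pos _).le).trans_le (hpt s x))
  have hne : {s : ℝ | 0 < s ∧ ∫ x, exp ((|g x| / s) ^ (2 : ℝ)) ∂ν ≤ 2}.Nonempty := by
    set s₀ := 2 * (|C| + 1)
    have hs₀ : 0 < s₀ := by positivity
    have hCs : |C / s₀| ≤ 1 / 2 := by
      rw [abs_div, abs_of_pos hs₀, div_le_iff₀ hs₀]; linarith
    have hlog : (C / s₀) ^ 2 ≤ log 2 := by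
      nlinarith [abs_nonneg (C / s₀), sq_abs (C / s₀), log_two_gt_d9]
    refine ⟨s₀, hs₀, ?_⟩
    simp_rw [abs_div_rpow_two]
    calc ∫ x, exp ((g x / s₀) ^ 2) ∂ν ≤ ∫ _, exp ((C / s₀) ^ 2) ∂ν :=
          integral_mono (hint s₀) (integrable_const _) (hpt s₀)
      _ ≤ 2 := by simpa using (exp_le_exp.2 hlog).trans_eq (exp_log two_pos)
  obtain ⟨s, ⟨hs, hs2⟩, hsr⟩ := exists_lt_of_csInf_lt hne h
  simp_rw [abs_div_rpow_two] at hs2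
  calc ∫⁻ x, .ofReal (exp ((g x / r) ^ 2)) ∂ν ≤ ∫⁻ x, .ofReal (exp ((g x / s) ^ 2)) ∂ν :=
        lintegral_mono fun x => ENNReal.ofReal_le_ofReal <| by
          rw [exp_le_exp, div_pow, div_pow]; gcongr
    _ = .ofReal (∫ x, exp ((g x / s) ^ 2) ∂ν) :=
        (ofReal_integral_eq_lintegral_ofReal (hint s) (ae_of_all _ fun _ => (exp_pos _).le)).symm
    _ ≤ 2 := by simpa using ENNReal.ofReal_le_ofReal hs2

end PsiNorm

section ExponentialMoments

variable {α β : Type*} [MeasurableSpace α] [MeasurableSpace β] {μ : Measure α} {ν : Measure β}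

lemma lintegral_exp_mul_sub_prod [SFinite ν] {f : α → ℝ} {h : β → ℝ} (hf : AEMeasurable f μ)
    (hh : AEMeasurable h ν) (u : ℝ) :
    ∫⁻ p, .ofReal (exp (u * (f p.1 - h p.2))) ∂μ.prod ν =
      (∫⁻ x, .ofReal (exp (u * f x)) ∂μ) * ∫⁻ y, .ofReal (exp (-u * h y)) ∂ν := by
  rw [← lintegral_prod_mul (by fun_prop) (by fun_prop)]
  congr with p
  rw [← ENNReal.ofReal_mul (exp_pos _).le, ← exp_add]
  ring_nf

lemma one_le_integral_exp_mul [IsProbabilityMeasure μ] {f : α → ℝ} (hf : Integrable f μ)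
    (hf0 : ∫ x, f x ∂μ = 0) {u : ℝ} (hexp : Integrable (fun x => exp (u * f x)) μ) :
    1 ≤ ∫ x, exp (u * f x) ∂μ := by
  have := convexOn_exp.map_integral_le continuous_exp.continuousOn isClosed_univ
    (ae_of_all _ fun _ => Set.mem_univ _) (hf.const_mul u) hexp
  simpa [integral_const_mul, hf0] using this

lemma ofReal_sqrt_pi_mul_lintegral_exp_sq [SFinite μ] {g : α → ℝ} (hg : AEMeasurable g μ)
    (r : ℝ) :
    .ofReal √π * ∫⁻ x, .ofReal (exp ((g x / r) ^ 2)) ∂μ =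
      ∫⁻ z, ∫⁻ x, .ofReal (exp (-z ^ 2)) * .ofReal (exp ((2 * z / r) * g x)) ∂μ := by
  have hF : AEMeasurable (fun p : α × ℝ => ENNReal.ofReal (exp ((2 * g p.1 / r) * p.2 - p.2 ^ 2)))
      (μ.prod volume) := by
    have := hg.comp_quasiMeasurePreserving
      (Measure.quasiMeasurePreserving_fst (μ := μ) (ν := (volume : Measure ℝ)))
    fun_prop
  calc .ofReal √π * ∫⁻ x, .ofReal (exp ((g x / r) ^ 2)) ∂μ
      = ∫⁻ x, (∫⁻ z, .ofReal (exp ((2 * g x / r) * z - z ^ 2))) ∂μ := by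
        rw [← lintegral_const_mul' _ _ ENNReal.ofReal_ne_top]
        congr with x
        rw [lintegral_exp_mul_sub_sq, ← ENNReal.ofReal_mul (sqrt_nonneg _)]
        ring_nf
    _ = _ := by
        rw [lintegral_lintegral_swap hF]
        congr with z
        congr with x
        rw [← ENNReal.ofReal_mul (exp_pos _).le, ← exp_add]
        ring_nf

/-- Linearizing the square by the Gaussian integral `√π exp w² = ∫ exp (2 w z - z²) dz` turns the
bound on the moment generating function into a bound on `∫ exp (g / r)²`. -/
lemma lintegral_exp_sq_le_two_of_lintegral_exp_mul_le [SFinite μ] {g : α → ℝ}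
    (hg : AEMeasurable g μ) {σ2 r : ℝ} (hr : 0 < r) (hσr : 16 / 3 * σ2 ≤ r ^ 2)
    (hmgf : ∀ u, ∫⁻ x, .ofReal (exp (u * g x)) ∂μ ≤ .ofReal (exp (σ2 * u ^ 2))) :
    ∫⁻ x, .ofReal (exp ((g x / r) ^ 2)) ∂μ ≤ 2 := by
  set κ := 1 - 4 * σ2 / r ^ 2 with hκ_def
  have hκ : 1 / 4 ≤ κ := by
    have : 4 * σ2 / r ^ 2 ≤ 3 / 4 := by rw [div_le_iff₀ (by positivity)]; linarith
    linarith
  have hπ : ENNReal.ofReal √π ≠ 0 := by simpa using pi_pos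
  refine (ENNReal.mul_le_mul_iff_right hπ ENNReal.ofReal_ne_top).1 ?_
  calc ENNReal.ofReal √π * ∫⁻ x, .ofReal (exp ((g x / r) ^ 2)) ∂μ
      = ∫⁻ z, ∫⁻ x, .ofReal (exp (-z ^ 2)) * .ofReal (exp ((2 * z / r) * g x)) ∂μ :=
        ofReal_sqrt_pi_mul_lintegral_exp_sq hg r
    _ ≤ ∫⁻ z, .ofReal (exp (-z ^ 2)) * .ofReal (exp (σ2 * (2 * z / r) ^ 2)) := by
        refine lintegral_mono fun z => ?_
        rw [lintegral_const_mul' _ _ ENNReal.ofReal_ne_top]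
        exact mul_le_mul_right (hmgf _) _
    _ = ∫⁻ z, .ofReal (exp (-κ * z ^ 2)) := by
        congr with z
        rw [← ENNReal.ofReal_mul (exp_pos _).le, ← exp_add, hκ_def]
        field_simp
        ring_nf
    _ = .ofReal √(π / κ) := lintegral_exp_neg_mul_sq (by linarith)
    _ ≤ .ofReal √π * 2 := by
        rw [show (2 : ℝ≥0∞) = .ofReal 2 by norm_num, ← ENNReal.ofReal_mul (sqrt_nonneg _)]
        refine ENNReal.ofReal_le_ofReal ((sqrt_le_sqrt (y := 4 * π) ?_).trans_eq ?_)
        · exact (div_le_iff₀ (by linarith)).2 (by nlinarith [pi_pos])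
        · rw [sqrt_mul zero_le_four, show (4 : ℝ) = 2 ^ 2 by norm_num, sqrt_sq zero_le_two,
            mul_comm]

lemma lintegral_exp_mul_le_of_lintegral_exp_sq_le {g : α → ℝ} {r : ℝ} (hr : 0 < r)
    (hψ : ∫⁻ x, .ofReal (exp ((g x / r) ^ 2)) ∂μ ≤ 2) (t : ℝ) :
    ∫⁻ x, .ofReal (exp (t * g x)) ∂μ ≤ 2 * .ofReal (exp (t ^ 2 * r ^ 2 / 4)) :=
  calc ∫⁻ x, .ofReal (exp (t * g x)) ∂μ
      ≤ ∫⁻ x, .ofReal (exp (t ^ 2 * r ^ 2 / 4)) * .ofReal (exp ((g x / r) ^ 2)) ∂μ :=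
        lintegral_mono fun x => by
          rw [← ENNReal.ofReal_mul (exp_pos _).le]
          exact ENNReal.ofReal_le_ofReal (exp_mul_le_exp_mul_exp_sq hr t (g x))
    _ = .ofReal (exp (t ^ 2 * r ^ 2 / 4)) * ∫⁻ x, .ofReal (exp ((g x / r) ^ 2)) ∂μ :=
        lintegral_const_mul' _ _ ENNReal.ofReal_ne_top
    _ ≤ 2 * .ofReal (exp (t ^ 2 * r ^ 2 / 4)) := by
        rw [mul_comm]
        exact mul_le_mul_left hψ _

/-- For `θ = t² r² / 2 ≤ 1`, `cosh (t x) ≤ exp (θ (x / r)²) ≤ θ exp (x / r)² + 1 - θ` by convexity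
of `exp`. -/
lemma lintegral_exp_mul_add_lintegral_exp_neg_mul_le_of_sq_le [IsProbabilityMeasure μ]
    {g : α → ℝ} {r t : ℝ} (hr : 0 < r) (ht : t ^ 2 * r ^ 2 ≤ 2)
    (hψ : ∫⁻ x, .ofReal (exp ((g x / r) ^ 2)) ∂μ ≤ 2) :
    ∫⁻ x, .ofReal (exp (t * g x)) ∂μ + ∫⁻ x, .ofReal (exp (-t * g x)) ∂μ ≤
      .ofReal (2 + t ^ 2 * r ^ 2) := by
  set θ := t ^ 2 * r ^ 2 / 2 with hθ
  have hθ0 : 0 ≤ θ := by positivity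
  have hθ1 : θ ≤ 1 := by linarith
  have hpt : ∀ x, exp (t * g x) + exp (-t * g x) ≤
      2 * θ * exp ((g x / r) ^ 2) + 2 * (1 - θ) := fun x => by
    have hcosh := cosh_le_exp_half_sq (t * g x)
    have hconv := convexOn_exp.2 (Set.mem_univ ((g x / r) ^ 2)) (Set.mem_univ 0) hθ0
      (sub_nonneg.2 hθ1) (add_sub_cancel _ _)
    simp only [smul_eq_mul, mul_zero, add_zero, exp_zero, mul_one] at hconv
    rw [cosh_eq, show (t * g x) ^ 2 / 2 = θ * (g x / r) ^ 2 by rw [hθ]; field_simp] at hcosh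
    rw [neg_mul]
    linarith
  calc _ ≤ ∫⁻ x, .ofReal (exp (t * g x)) + .ofReal (exp (-t * g x)) ∂μ := le_lintegral_add _ _
    _ ≤ ∫⁻ x, .ofReal (2 * θ) * .ofReal (exp ((g x / r) ^ 2)) + .ofReal (2 * (1 - θ)) ∂μ :=
        lintegral_mono fun x => by
          rw [← ENNReal.ofReal_add (exp_pos _).le (exp_pos _).le,
            ← ENNReal.ofReal_mul (by positivity),
            ← ENNReal.ofReal_add (by positivity) (by linarith)]
          exact ENNReal.ofReal_le_ofReal (hpt x)
    _ = .ofReal (2 * θ) * ∫⁻ x, .ofReal (exp ((g x / r) ^ 2)) ∂μ + .ofReal (2 * (1 - θ)) := by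
        rw [lintegral_add_right _ measurable_const, lintegral_const_mul' _ _ ENNReal.ofReal_ne_top,
          lintegral_const, measure_univ, mul_one]
    _ ≤ .ofReal (2 * θ) * 2 + .ofReal (2 * (1 - θ)) := by gcongr
    _ = .ofReal (2 + t ^ 2 * r ^ 2) := by
        rw [show (2 : ℝ≥0∞) = .ofReal 2 by norm_num, ← ENNReal.ofReal_mul (by positivity),
          ← ENNReal.ofReal_add (by positivity) (by linarith)]
        congr 1
        ring

lemma lintegral_exp_mul_add_lintegral_exp_neg_mul_le [IsProbabilityMeasure μ] {g : α → ℝ}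
    {r : ℝ} (hr : 0 < r) (hψ : ∫⁻ x, .ofReal (exp ((g x / r) ^ 2)) ∂μ ≤ 2) (t : ℝ) :
    ∫⁻ x, .ofReal (exp (t * g x)) ∂μ + ∫⁻ x, .ofReal (exp (-t * g x)) ∂μ ≤
      2 * .ofReal (exp (t ^ 2 * r ^ 2)) := by
  have htr : 0 ≤ t ^ 2 * r ^ 2 := by positivity
  rw [show (2 : ℝ≥0∞) = .ofReal 2 by norm_num, ← ENNReal.ofReal_mul zero_le_two]
  rcases le_total (t ^ 2 * r ^ 2) 2 with ht | ht
  · refine (lintegral_exp_mul_add_lintegral_exp_neg_mul_le_of_sq_le hr ht hψ).trans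
      (ENNReal.ofReal_le_ofReal ?_)
    linarith [add_one_le_exp (t ^ 2 * r ^ 2)]
  · have hpos := lintegral_exp_mul_le_of_lintegral_exp_sq_le hr hψ t
    have hneg := lintegral_exp_mul_le_of_lintegral_exp_sq_le hr hψ (-t)
    rw [neg_sq] at hneg
    refine (add_le_add hpos hneg).trans ?_
    rw [← two_mul, ← mul_assoc, show (2 : ℝ≥0∞) * 2 = .ofReal 4 by norm_num,
      ← ENNReal.ofReal_mul zero_le_four]
    refine ENNReal.ofReal_le_ofReal ?_
    have h3 : 2 ≤ exp (3 * (t ^ 2 * r ^ 2) / 4) := by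
      linarith [add_one_le_exp (3 * (t ^ 2 * r ^ 2) / 4)]
    calc 4 * exp (t ^ 2 * r ^ 2 / 4)
        ≤ 2 * (exp (3 * (t ^ 2 * r ^ 2) / 4) * exp (t ^ 2 * r ^ 2 / 4)) := by
          nlinarith [exp_pos (t ^ 2 * r ^ 2 / 4)]
      _ = 2 * exp (t ^ 2 * r ^ 2) := by rw [← exp_add]; ring_nf

/-- Symmetrization: for `A = ∫ exp (t f)` and `B = ∫ exp (-t f) ≥ 1`, the moment generating
function of `f x - f y` at `t` and at `-t` both equal `A B`. -/
lemma integral_exp_mul_le_of_lintegral_exp_sq_sub_le [IsProbabilityMeasure μ] {f : α → ℝ}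
    (hfm : AEMeasurable f μ) (hfi : Integrable f μ) (hf0 : ∫ x, f x ∂μ = 0)
    (hexp : ∀ u, Integrable (fun x => exp (u * f x)) μ) {r : ℝ} (hr : 0 < r)
    (hψ : ∫⁻ p, .ofReal (exp (((f p.1 - f p.2) / r) ^ 2)) ∂μ.prod μ ≤ 2) (t : ℝ) :
    ∫ x, exp (t * f x) ∂μ ≤ exp (t ^ 2 * r ^ 2) := by
  have hB : 1 ≤ ∫⁻ x, .ofReal (exp (-t * f x)) ∂μ := by
    rw [← ENNReal.ofReal_one, ← ofReal_integral_eq_lintegral_ofReal (hexp _)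
      (ae_of_all _ fun _ => (exp_pos _).le)]
    exact ENNReal.ofReal_le_ofReal (one_le_integral_exp_mul hfi hf0 (hexp _))
  set A := ∫⁻ x, .ofReal (exp (t * f x)) ∂μ
  set B := ∫⁻ x, .ofReal (exp (-t * f x)) ∂μ
  have hAB : A * B + B * A ≤ 2 * .ofReal (exp (t ^ 2 * r ^ 2)) := by
    have := lintegral_exp_mul_add_lintegral_exp_neg_mul_le (g := fun p : α × α => f p.1 - f p.2)
      hr hψ t
    rwa [lintegral_exp_mul_sub_prod hfm hfm, lintegral_exp_mul_sub_prod hfm hfm, neg_neg] at this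
  have hA : A ≤ .ofReal (exp (t ^ 2 * r ^ 2)) := by
    rw [mul_comm B, ← two_mul] at hAB
    exact (le_mul_of_one_le_right' hB).trans
      ((ENNReal.mul_le_mul_iff_right two_ne_zero ENNReal.ofNat_ne_top).1 hAB)
  rw [integral_eq_lintegral_of_nonneg_ae (ae_of_all _ fun _ => (exp_pos _).le)
    (hexp t).aestronglyMeasurable]
  exact ENNReal.toReal_le_of_le_ofReal (exp_pos _).le hA

end ExponentialMoments

section SubgaussianConstant

variable {M : Type*} [PseudoMetricSpace M] [MeasurableSpace M] {μ : Measure M}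

def lipschitzDiffPsi2Sq (μ : Measure M) : Set ℝ :=
  {v : ℝ | ∃ f : M → ℝ, LipschitzWith 1 f ∧
    v = psiNorm (μ.prod μ) 2 (fun p : M × M => f p.1 - f p.2) ^ 2}

lemma zero_mem_lipschitzDiffPsi2Sq [IsProbabilityMeasure μ] : (0 : ℝ) ∈ lipschitzDiffPsi2Sq μ := by
  refine ⟨fun _ => 0, LipschitzWith.const' 0, ?_⟩
  have h : psiNorm (μ.prod μ) 2 (fun _ : M × M => (0 : ℝ) - 0) = 0 :=
    le_antisymm (le_of_forall_gt_imp_ge_of_dense fun r hr =>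
      psiNorm_two_le_of_lintegral_le hr aemeasurable_const (by simp)) (psiNorm_nonneg _ _ _)
  rw [h, sq, mul_zero]

lemma lintegral_exp_mul_sub_prod_le_of_isSubgaussianBound [IsProbabilityMeasure μ] {σ2 : ℝ}
    (hσ : IsSubgaussianBound μ σ2) {f : M → ℝ} (hf : LipschitzWith 1 f) (hfm : AEMeasurable f μ)
    (hfi : Integrable f μ) (hexp : ∀ u, Integrable (fun x => exp (u * f x)) μ) (u : ℝ) :
    ∫⁻ p, .ofReal (exp (u * (f p.1 - f p.2))) ∂μ.prod μ ≤ .ofReal (exp (σ2 * u ^ 2)) := by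
  set m := ∫ x, f x ∂μ
  have hcentred : ∀ v, ∫⁻ x, .ofReal (exp (v * (f x - m))) ∂μ ≤ .ofReal (exp (σ2 * v ^ 2 / 2)) :=
    fun v => by
      have hint : Integrable (fun x => exp (v * (f x - m))) μ :=
        ((hexp v).mul_const (exp (-v * m))).congr
          (ae_of_all _ fun x => by simp only; rw [← exp_add]; ring_nf)
      rw [← ofReal_integral_eq_lintegral_ofReal hint (ae_of_all _ fun _ => (exp_pos _).le)]
      refine ENNReal.ofReal_le_ofReal (hσ.2 _ (by simpa using hf.sub (LipschitzWith.const m)) ?_ v)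
      simp [integral_sub hfi (integrable_const m), m]
  have hprod := lintegral_exp_mul_sub_prod (hfm.sub_const m) (hfm.sub_const m) u
  simp only [sub_sub_sub_cancel_right] at hprod
  rw [hprod]
  refine (mul_le_mul' (hcentred u) (hcentred (-u))).trans_eq ?_
  rw [← ENNReal.ofReal_mul (exp_pos _).le, ← exp_add]
  congr 2
  ring

theorem psiNorm_sub_sq_le_of_isSubgaussianBound [IsProbabilityMeasure μ] {f : M → ℝ}
    (hf : LipschitzWith 1 f) {σ2 : ℝ} (hσ : IsSubgaussianBound μ σ2) :
    psiNorm (μ.prod μ) 2 (fun p : M × M => f p.1 - f p.2) ^ 2 ≤ 16 / 3 * σ2 := by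
  have hσ0 : 0 ≤ 16 / 3 * σ2 := by linarith [hσ.1]
  suffices h : psiNorm (μ.prod μ) 2 (fun p : M × M => f p.1 - f p.2) ≤ √(16 / 3 * σ2) by
    simpa [sq_sqrt hσ0] using pow_le_pow_left₀ (psiNorm_nonneg _ _ _) h 2
  refine le_of_forall_gt_imp_ge_of_dense fun r hr => ?_
  have hr0 : 0 < r := (sqrt_nonneg _).trans_lt hr
  have hσr : 16 / 3 * σ2 ≤ r ^ 2 := ((sqrt_lt' hr0).1 hr).le
  by_cases hint : Integrable (fun p : M × M => exp ((|f p.1 - f p.2| / r) ^ (2 : ℝ))) (μ.prod μ)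
  swap
  · exact psiNorm_le_of_integral_le hr0 (by rw [integral_undef hint]; norm_num)
  simp_rw [abs_div_rpow_two] at hint
  have hfm : AEMeasurable f μ := aemeasurable_of_aemeasurable_abs_sub_prod
    (aemeasurable_abs_of_aemeasurable_exp_sq hr0 hint.aemeasurable)
  obtain ⟨hfi, hexp⟩ :=
    integrable_of_lintegral_exp_sq_prod_ne_top hfm hr0 hint.lintegral_lt_top.ne
  exact psiNorm_two_le_of_lintegral_le hr0 hfm.sub_prod
    (lintegral_exp_sq_le_two_of_lintegral_exp_mul_le hfm.sub_prod hr0 hσr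
      (lintegral_exp_mul_sub_prod_le_of_isSubgaussianBound hσ hf hfm hfi hexp))

/-- The truncations `max (-N) (min f N)` are bounded, so their `ψ₂`-norms are not junk values;
Fatou's lemma passes the bound to `f`. -/
lemma lintegral_exp_sq_sub_le_two_of_bddAbove [IsProbabilityMeasure μ]
    (hS : BddAbove (lipschitzDiffPsi2Sq μ)) {f : M → ℝ} (hf : LipschitzWith 1 f)
    (hfm : AEMeasurable f μ) {r : ℝ} (hr : √(sSup (lipschitzDiffPsi2Sq μ)) < r) :
    ∫⁻ p, .ofReal (exp (((f p.1 - f p.2) / r) ^ 2)) ∂μ.prod μ ≤ 2 := by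
  set F : ℕ → M → ℝ := fun N x => max (-N) (min (f x) N)
  have hF_abs : ∀ N x, |F N x| ≤ N := fun N x =>
    abs_le.2 ⟨le_max_left _ _, max_le (by linarith [N.cast_nonneg (α := ℝ)]) (min_le_right _ _)⟩
  have hF_eq : ∀ (N : ℕ) x, |f x| ≤ N → F N x = f x := fun N x hx => by
    simp [F, min_eq_left (abs_le.1 hx).2, max_eq_right (abs_le.1 hx).1]
  have hFm : ∀ N, AEMeasurable (F N) μ := fun N =>
    aemeasurable_const.max (hfm.min aemeasurable_const)
  have hF : ∀ N, ∫⁻ p, .ofReal (exp (((F N p.1 - F N p.2) / r) ^ 2)) ∂μ.prod μ ≤ 2 := fun N => by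
    have hψ : psiNorm (μ.prod μ) 2 (fun p : M × M => F N p.1 - F N p.2) < r :=
      ((le_sqrt (psiNorm_nonneg _ _ _) ((le_csSup hS zero_mem_lipschitzDiffPsi2Sq))).2
        (le_csSup hS ⟨F N, (hf.min_const _).const_max _, rfl⟩)).trans_lt hr
    refine lintegral_exp_sq_le_two_of_psiNorm_lt (hFm N).sub_prod (C := 2 * N) (fun p => ?_) hψ
    linarith [abs_sub (F N p.1) (F N p.2), hF_abs N p.1, hF_abs N p.2]
  have hlim : ∀ p : M × M, ∀ᶠ N in atTop, F N p.1 - F N p.2 = f p.1 - f p.2 := fun p => by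
    filter_upwards [eventually_ge_atTop ⌈max |f p.1| |f p.2|⌉₊] with N hN
    have hN : max |f p.1| |f p.2| ≤ N := (Nat.le_ceil _).trans (by exact_mod_cast hN)
    rw [hF_eq N _ ((le_max_left _ _).trans hN), hF_eq N _ ((le_max_right _ _).trans hN)]
  calc ∫⁻ p, .ofReal (exp (((f p.1 - f p.2) / r) ^ 2)) ∂μ.prod μ
      = ∫⁻ p, liminf (fun N => .ofReal (exp (((F N p.1 - F N p.2) / r) ^ 2))) atTop ∂μ.prod μ :=
        lintegral_congr fun p => (Tendsto.liminf_eq <| tendsto_const_nhds.congr' <|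
          (hlim p).mono fun N hN => by rw [hN]).symm
    _ ≤ liminf (fun N => ∫⁻ p, .ofReal (exp (((F N p.1 - F N p.2) / r) ^ 2)) ∂μ.prod μ) atTop :=
        lintegral_liminf_le' fun N => by have := (hFm N).sub_prod; fun_prop
    _ ≤ 2 := liminf_le_of_frequently_le' (Eventually.of_forall hF).frequently

lemma IsSubgaussianBound.mono {σ2 τ2 : ℝ} (hσ : IsSubgaussianBound μ σ2) (hστ : σ2 ≤ τ2) :
    IsSubgaussianBound μ τ2 :=
  ⟨hσ.1.trans hστ, fun f hf hf0 t => (hσ.2 f hf hf0 t).trans <| exp_le_exp.2 <| by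
    gcongr⟩

theorem isSubgaussianBound_two_mul_sSup [IsProbabilityMeasure μ]
    (hS : BddAbove (lipschitzDiffPsi2Sq μ)) :
    IsSubgaussianBound μ (2 * sSup (lipschitzDiffPsi2Sq μ)) := by
  set s := sSup (lipschitzDiffPsi2Sq μ)
  have hs : 0 ≤ s := le_csSup hS zero_mem_lipschitzDiffPsi2Sq
  refine ⟨by positivity, fun f hf hf0 t => ?_⟩
  by_cases hexp : Integrable (fun x => exp (t * f x)) μ
  swap
  · rw [integral_undef hexp]; positivity
  rcases eq_or_ne t 0 with rfl | ht
  · simp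
  have hfm := aemeasurable_of_aemeasurable_exp_mul ht hexp.aemeasurable
  have hψ : ∀ r, √s < r → ∫⁻ p, .ofReal (exp (((f p.1 - f p.2) / r) ^ 2)) ∂μ.prod μ ≤ 2 :=
    fun r hr => lintegral_exp_sq_sub_le_two_of_bddAbove hS hf hfm hr
  obtain ⟨hfi, hexp_all⟩ := integrable_of_lintegral_exp_sq_prod_ne_top hfm (by positivity)
    (ne_top_of_le_ne_top ENNReal.ofNat_ne_top (hψ _ (lt_add_one √s)))
  have hlim : Tendsto (fun r => exp (t ^ 2 * r ^ 2)) (𝓝[>] √s) (𝓝 (exp (t ^ 2 * √s ^ 2))) :=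
    ((by fun_prop : Continuous fun r : ℝ => exp (t ^ 2 * r ^ 2)).tendsto _).mono_left
      nhdsWithin_le_nhds
  calc ∫ x, exp (t * f x) ∂μ ≤ exp (t ^ 2 * √s ^ 2) :=
        ge_of_tendsto hlim <| eventually_nhdsWithin_of_forall fun r hr =>
          integral_exp_mul_le_of_lintegral_exp_sq_sub_le hfm hfi hf0 hexp_all
            ((sqrt_nonneg s).trans_lt hr) (hψ r hr) t
    _ = exp (2 * s * t ^ 2 / 2) := by rw [sq_sqrt hs]; ring_nf

end SubgaussianConstant

/-- **Lemma 3.2.** For a metric probability space `(M,d,μ)`,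
`(1/(4√6))·sup_f ‖f(x)−f(y)‖²_{ψ₂(μ⊗μ)} ≤ σ²(μ) ≤ 4·sup_f ‖f(x)−f(y)‖²_{ψ₂(μ⊗μ)}`,
the suprema running over all `f : M → ℝ` with `‖f‖_Lip ≤ 1`. -/
theorem subgaussian_const_vs_symmetrized_psi2 {M : Type*} [MetricSpace M]
    [MeasurableSpace M] (μ : Measure M) [IsProbabilityMeasure μ] :
    (1 / (4 * Real.sqrt 6)) *
        sSup {v : ℝ | ∃ f : M → ℝ, LipschitzWith 1 f ∧
          v = psiNorm (μ.prod μ) 2 (fun p : M × M => f p.1 - f p.2) ^ 2} ≤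
        subgaussianConst μ ∧
      subgaussianConst μ ≤
        4 * sSup {v : ℝ | ∃ f : M → ℝ, LipschitzWith 1 f ∧
          v = psiNorm (μ.prod μ) 2 (fun p : M × M => f p.1 - f p.2) ^ 2} := by
  change 1 / (4 * √6) * sSup (lipschitzDiffPsi2Sq μ) ≤ subgaussianConst μ ∧
    subgaussianConst μ ≤ 4 * sSup (lipschitzDiffPsi2Sq μ)
  have hub : ∀ σ2, IsSubgaussianBound μ σ2 → 16 / 3 * σ2 ∈ upperBounds (lipschitzDiffPsi2Sq μ) := by
    rintro σ2 hσ _ ⟨f, hf, rfl⟩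
    exact psiNorm_sub_sq_le_of_isSubgaussianBound hf hσ
  by_cases hS : BddAbove (lipschitzDiffPsi2Sq μ)
  · have hU : IsSubgaussianBound μ (4 * sSup (lipschitzDiffPsi2Sq μ)) :=
      (isSubgaussianBound_two_mul_sSup hS).mono <| by
        linarith [le_csSup hS zero_mem_lipschitzDiffPsi2Sq]
    refine ⟨le_csInf ⟨_, hU⟩ fun σ2 hσ => ?_, csInf_le ⟨0, fun _ h => h.1⟩ hU⟩
    have hsup := csSup_le ⟨0, zero_mem_lipschitzDiffPsi2Sq⟩ (hub σ2 hσ)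
    have h6 : 4 / 3 ≤ √6 := le_sqrt_of_sq_le (by norm_num)
    rw [div_mul_eq_mul_div, one_mul, div_le_iff₀ (by positivity)]
    nlinarith [hσ.1]
  -- With no subgaussian bound, both sides are junk values: `sSup` and `sInf ∅` are `0` in `ℝ`.
  · have hT : {σ2 : ℝ | IsSubgaussianBound μ σ2} = ∅ :=
      Set.eq_empty_of_forall_notMem fun σ2 hσ => hS ⟨_, hub σ2 hσ⟩
    simp [subgaussianConst, hT, Real.sSup_of_not_bddAbove hS]
end

section
/- Let M = {0,1}ⁿ be the discrete hypercube equipped with the Hamming distance dₙ(x,y) = #{i : xᵢ ≠ yᵢ} and the uniform probability measure μ. Then there is a universal constant c (independent of n and A) such that for any non-empty set A ⊂ {0,1}ⁿ, the subgaussian constant of the normalized restricted (uniform-on-A) measure μ_A satisfies σ²(μ_A) ≤ c·n·log(e/μ(A)). -/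
open MeasureTheory Real Filter

/-- Every subset of the (finite, discrete) Hamming cube is measurable. -/
instance {ι : Type*} {β : ι → Type*} : MeasurableSpace (Hamming β) := ⊤

/-- The uniform probability measure on the discrete hypercube `{0,1}ⁿ`
(realized as `Hamming (fun _ : Fin n => Bool)`, carrying the Hamming distance). -/
noncomputable def uniformCube (n : ℕ) : Measure (Hamming fun _ : Fin n => Bool) :=
  ((Fintype.card (Hamming fun _ : Fin n => Bool) : ENNReal))⁻¹ • Measure.count

/-
Extend a 1-Lipschitz `f` on `A` to a 1-Lipschitz `F` on the cube and centre it on the whole cube,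
`G = F - 𝔼 F`. McDiarmid's inequality gives `∑ exp (t G) ≤ 2ⁿ exp (t² n / 8)`, and summing the
moment bounds it implies yields the exponential square bound `∑ exp (G² / 2n) ≤ 2 · 2ⁿ`.
Since `f` has mean zero on `A`, Jensen gives `𝔼_A exp (t f) ≤ 𝔼_A exp (t G) · 𝔼_A exp (-t G)`.
When `2 n t² ≥ 1`, bound each factor by McDiarmid, losing `2ⁿ / |A|` twice. When `2 n t² < 1`,
symmetrize: `cosh u ≤ exp (u² / 2)` reduces the product to `(𝔼_A exp (t² G²))²`, and the power
mean inequality with exponent `2 n t²` against the exponential square bound only loses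
`(2ⁿ⁺¹ / |A|) ^ (2 n t²)`.
-/

open Finset
open scoped Nat

theorem exp_mul_add_exp_mul_le {a b : ℝ} (hab : |a - b| ≤ 1) (s : ℝ) :
    exp (s * a) + exp (s * b) ≤ 2 * exp (s * ((a + b) / 2)) * exp (s ^ 2 / 8) := by
  have hcosh : cosh (s * ((a - b) / 2)) ≤ exp (s ^ 2 / 8) := by
    refine (cosh_le_exp_half_sq _).trans (exp_le_exp.2 ?_)
    have : (a - b) ^ 2 ≤ 1 := (sq_le_one_iff_abs_le_one _).2 hab
    nlinarith [sq_nonneg s]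
  calc exp (s * a) + exp (s * b) = 2 * exp (s * ((a + b) / 2)) * cosh (s * ((a - b) / 2)) := by
        rw [cosh_eq, mul_assoc, mul_div_assoc', mul_add, ← exp_add, ← exp_add]
        ring_nf
    _ ≤ 2 * exp (s * ((a + b) / 2)) * exp (s ^ 2 / 8) := by gcongr

section FinsetSums

variable {α : Type*} (s : Finset α) (g : α → ℝ)

theorem card_le_sum_exp_of_sum_eq_zero (h0 : ∑ x ∈ s, g x = 0) :
    (#s : ℝ) ≤ ∑ x ∈ s, exp (g x) :=
  calc (#s : ℝ) = ∑ x ∈ s, (g x + 1) := by simp [sum_add_distrib, h0]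
    _ ≤ ∑ x ∈ s, exp (g x) := sum_le_sum fun x _ => add_one_le_exp _

theorem sum_exp_mul_sum_exp_neg_le_sq :
    (∑ x ∈ s, exp (g x)) * ∑ x ∈ s, exp (-g x) ≤ (∑ x ∈ s, exp (g x ^ 2)) ^ 2 := by
  have hswap : ∑ x ∈ s, ∑ y ∈ s, exp (-(g x - g y)) = ∑ x ∈ s, ∑ y ∈ s, exp (g x - g y) := by
    rw [sum_comm]; simp only [neg_sub]
  calc (∑ x ∈ s, exp (g x)) * ∑ y ∈ s, exp (-g y) = ∑ x ∈ s, ∑ y ∈ s, exp (g x - g y) := by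
        simp only [sum_mul_sum, ← exp_add, sub_eq_add_neg]
    _ = ∑ x ∈ s, ∑ y ∈ s, cosh (g x - g y) := by
        simp only [cosh_eq, ← sum_div, sum_add_distrib, hswap]; ring
    _ ≤ ∑ x ∈ s, ∑ y ∈ s, exp (g x ^ 2) * exp (g y ^ 2) := by
        gcongr with x _ y _
        refine (cosh_le_exp_half_sq _).trans ?_
        rw [← exp_add, exp_le_exp]
        nlinarith [sq_nonneg (g x + g y)]
    _ = (∑ x ∈ s, exp (g x ^ 2)) ^ 2 := by rw [sq, sum_mul_sum]

theorem sum_exp_mul_le_card_mul_rpow (hs : s.Nonempty) {θ : ℝ} (hθ₀ : 0 ≤ θ) (hθ₁ : θ ≤ 1) :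
    ∑ x ∈ s, exp (θ * g x) ≤ #s * ((∑ x ∈ s, exp (g x)) / #s) ^ θ := by
  have hcard : (0 : ℝ) < #s := by exact_mod_cast hs.card_pos
  have := (concaveOn_rpow hθ₀ hθ₁).le_map_sum (t := s) (w := fun _ => (#s : ℝ)⁻¹)
    (p := fun x => exp (g x)) (fun _ _ => by positivity) (by simp [hcard.ne'])
    (fun x _ => (exp_pos _).le)
  simp only [smul_eq_mul, ← exp_mul, inv_mul_eq_div, ← sum_div] at this
  rw [← div_le_iff₀' hcard]
  simpa only [mul_comm θ] using this

end FinsetSums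

theorem hammingDist_fin_cons {α : Type*} [DecidableEq α] {n : ℕ} (a b : α) (x y : Fin n → α) :
    hammingDist (Fin.cons a x : Fin (n + 1) → α) (Fin.cons b y) =
      (if a = b then 0 else 1) + hammingDist x y := by
  simp only [hammingDist, card_filter, Fin.sum_univ_succ, Fin.cons_zero, Fin.cons_succ]
  by_cases h : a = b <;> simp [h]

theorem sum_fin_cons_bool {M : Type*} [AddCommMonoid M] {n : ℕ} (f : (Fin (n + 1) → Bool) → M) :
    ∑ z, f z = ∑ x : Fin n → Bool, (f (Fin.cons false x) + f (Fin.cons true x)) := by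
  rw [← (Fin.consEquiv fun _ : Fin (n + 1) => Bool).sum_comp f, Fintype.sum_prod_type,
    Fintype.sum_bool, sum_add_distrib]
  exact add_comm _ _

/-- McDiarmid's bounded-differences inequality on the discrete cube. -/
theorem sum_exp_mul_le_of_sum_eq_zero {n : ℕ} (F : (Fin n → Bool) → ℝ)
    (hF : ∀ x y, |F x - F y| ≤ hammingDist x y) (h0 : ∑ x, F x = 0) (t : ℝ) :
    ∑ x, exp (t * F x) ≤ 2 ^ n * exp (t ^ 2 * n / 8) := by
  induction n with
  | zero =>
    have hF0 : ∀ x, F x = 0 := fun x => by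
      rwa [Fintype.sum_unique, ← Unique.eq_default x] at h0
    simp [hF0]
  | succ n ih =>
    set G : (Fin n → Bool) → ℝ := fun x => (F (Fin.cons false x) + F (Fin.cons true x)) / 2
    have hG : ∀ x y, |G x - G y| ≤ hammingDist x y := by
      intro x y
      have h₁ := hF (Fin.cons false x) (Fin.cons false y)
      have h₂ := hF (Fin.cons true x) (Fin.cons true y)
      simp only [hammingDist_fin_cons, if_true, zero_add] at h₁ h₂
      have hsplit : G x - G y = ((F (Fin.cons false x) - F (Fin.cons false y)) +
          (F (Fin.cons true x) - F (Fin.cons true y))) / 2 := by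
        simp only [G]; ring
      rw [hsplit, abs_div, abs_two]
      linarith [abs_add_le (F (Fin.cons false x) - F (Fin.cons false y))
        (F (Fin.cons true x) - F (Fin.cons true y))]
    have hG0 : ∑ x, G x = 0 := by
      rw [← sum_div, ← sum_fin_cons_bool F, h0, zero_div]
    have hpair : ∀ x, exp (t * F (Fin.cons false x)) + exp (t * F (Fin.cons true x)) ≤
        2 * exp (t ^ 2 / 8) * exp (t * G x) := by
      intro x
      have hd := hF (Fin.cons false x) (Fin.cons true x)
      simp only [hammingDist_fin_cons, hammingDist_self] at hd
      have := exp_mul_add_exp_mul_le (hd.trans (by norm_num)) t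
      linarith
    calc ∑ z, exp (t * F z) ≤ ∑ x, 2 * exp (t ^ 2 / 8) * exp (t * G x) := by
          rw [sum_fin_cons_bool]; exact sum_le_sum fun x _ => hpair x
      _ ≤ 2 * exp (t ^ 2 / 8) * (2 ^ n * exp (t ^ 2 * n / 8)) := by
          rw [← mul_sum]; gcongr; exact ih G hG hG0
      _ = 2 ^ (n + 1) * exp (t ^ 2 * (n + 1 : ℕ) / 8) := by
          rw [mul_mul_mul_comm, ← exp_add, pow_succ]; push_cast; ring_nf

local notation "𝐇" n:max => Hamming fun _ : Fin n => Bool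

theorem card_hamming_fin_bool (n : ℕ) : Fintype.card (𝐇 n) = 2 ^ n := by
  rw [Fintype.card_congr Hamming.ofHamming]
  simp

theorem one_le_two_pow_div_card {n : ℕ} {s : Finset (𝐇 n)} (hs : s.Nonempty) :
    1 ≤ (2 : ℝ) ^ n / #s := by
  rw [le_div_iff₀ (by exact_mod_cast hs.card_pos), one_mul]
  exact_mod_cast (card_le_univ s).trans (card_hamming_fin_bool n).le

namespace LipschitzWith

variable {n : ℕ} {F : 𝐇 n → ℝ} {s : Finset (𝐇 n)}

theorem sum_exp_mul_le (hF : LipschitzWith 1 F) (h0 : ∑ x, F x = 0) (t : ℝ) :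
    ∑ x, exp (t * F x) ≤ 2 ^ n * exp (t ^ 2 * n / 8) := by
  have hF' : ∀ x y, |F (Hamming.toHamming x) - F (Hamming.toHamming y)| ≤ hammingDist x y :=
    fun x y => by
      simpa [Real.dist_eq, Hamming.dist_eq_hammingDist] using
        hF.dist_le_mul (Hamming.toHamming x) (Hamming.toHamming y)
  rw [← Hamming.toHamming.sum_comp] at h0 ⊢
  exact sum_exp_mul_le_of_sum_eq_zero _ hF' h0 t

theorem sum_cosh_mul_le (hF : LipschitzWith 1 F) (h0 : ∑ x, F x = 0) (t : ℝ) :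
    ∑ x, cosh (t * F x) ≤ 2 ^ n * exp (t ^ 2 * n / 8) := by
  have hneg := hF.sum_exp_mul_le h0 (-t)
  simp only [neg_mul, even_two, Even.neg_pow] at hneg
  simp only [cosh_eq, ← sum_div, sum_add_distrib]
  linarith [hF.sum_exp_mul_le h0 t]

theorem sum_mul_pow_le (hF : LipschitzWith 1 F) (h0 : ∑ x, F x = 0) (u : ℝ) (k : ℕ) :
    ∑ x, (u * F x) ^ (2 * k) ≤ (2 * k)! * (2 ^ n * exp (u ^ 2 * n / 8)) := by
  calc ∑ x, (u * F x) ^ (2 * k) ≤ ∑ x, (2 * k)! * cosh (u * F x) := by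
        refine sum_le_sum fun x _ => ?_
        have := le_hasSum (hasSum_cosh (u * F x)) k fun j _ =>
          div_nonneg ((even_two_mul j).pow_nonneg _) (by positivity)
        rwa [div_le_iff₀' (by positivity)] at this
    _ ≤ (2 * k)! * (2 ^ n * exp (u ^ 2 * n / 8)) := by
        rw [← mul_sum]; gcongr; exact hF.sum_cosh_mul_le h0 u

theorem sum_sq_div_pow_div_factorial_le (hF : LipschitzWith 1 F) (h0 : ∑ x, F x = 0)
    (hn : 0 < n) (k : ℕ) : ∑ x, (F x ^ 2 / (2 * n)) ^ k / k ! ≤ 2 ^ n * (1 / 2) ^ k := by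
  obtain rfl | hk := k.eq_zero_or_pos
  · simp [card_hamming_fin_bool]
  have hn' : (0 : ℝ) < n := by exact_mod_cast hn
  have hk' : (0 : ℝ) < k := by exact_mod_cast hk
  set u := √(8 * k / n)
  have hu : u ^ 2 = 8 * k / n := sq_sqrt (by positivity)
  have hrescale : ∀ x, F x ^ 2 / (2 * n) = (u * F x) ^ 2 / (16 * k) := fun x => by
    rw [mul_pow, hu]; field_simp; ring
  have hexp : exp (u ^ 2 * n / 8) = exp 1 ^ k := by
    rw [hu, ← exp_nat_mul]; congr 1; field_simp
  calc ∑ x, (F x ^ 2 / (2 * n)) ^ k / k !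
      = (∑ x, (u * F x) ^ (2 * k)) / ((16 * k) ^ k * k !) := by
        simp only [hrescale, div_pow, ← pow_mul, sum_div, div_div]
    _ ≤ (2 * k)! * (2 ^ n * exp 1 ^ k) / ((16 * k) ^ k * k !) := by
        gcongr; rw [← hexp]; exact hF.sum_mul_pow_le h0 u k
    _ ≤ (2 * k) ^ k * k ! * (2 ^ n * exp 1 ^ k) / ((16 * k) ^ k * k !) := by
        gcongr; exact_mod_cast Nat.factorial_two_mul_le k
    _ = 2 ^ n * (exp 1 / 8) ^ k := by
        rw [div_pow, show (16 * k : ℝ) ^ k = 8 ^ k * (2 * k) ^ k by rw [← mul_pow]; ring]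
        field_simp
    _ ≤ 2 ^ n * (1 / 2) ^ k := by
        have : exp 1 / 8 ≤ 1 / 2 := by linarith [exp_one_lt_d9]
        gcongr

theorem sum_exp_sq_div_le (hF : LipschitzWith 1 F) (h0 : ∑ x, F x = 0) (hn : 0 < n) :
    ∑ x, exp (F x ^ 2 / (2 * n)) ≤ 2 * 2 ^ n := by
  have hexp : ∀ x, HasSum (fun k : ℕ => (F x ^ 2 / (2 * n)) ^ k / k !)
      (exp (F x ^ 2 / (2 * n))) :=
    fun x => by rw [exp_eq_exp_ℝ]; exact NormedSpace.expSeries_div_hasSum_exp _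
  calc ∑ x, exp (F x ^ 2 / (2 * n)) ≤ 2 ^ n * 2 :=
        hasSum_le (hF.sum_sq_div_pow_div_factorial_le h0 hn) (hasSum_sum fun x _ => hexp x)
          (hasSum_geometric_two.mul_left _)
    _ = 2 * 2 ^ n := mul_comm _ _

theorem sum_exp_mul_sum_exp_neg_le_sq_mul_exp (hF : LipschitzWith 1 F) (h0 : ∑ x, F x = 0)
    (s : Finset (𝐇 n)) (t : ℝ) :
    (∑ x ∈ s, exp (t * F x)) * ∑ x ∈ s, exp (-(t * F x)) ≤ (2 ^ n) ^ 2 * exp (t ^ 2 * n / 4) := by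
  have hsub : ∀ u, ∑ x ∈ s, exp (u * F x) ≤ 2 ^ n * exp (u ^ 2 * n / 8) := fun u =>
    (sum_le_univ_sum_of_nonneg fun _ => (exp_pos _).le).trans (hF.sum_exp_mul_le h0 u)
  have hneg := hsub (-t)
  simp only [neg_mul, even_two, Even.neg_pow] at hneg
  calc (∑ x ∈ s, exp (t * F x)) * ∑ x ∈ s, exp (-(t * F x))
      ≤ (2 ^ n * exp (t ^ 2 * n / 8)) * (2 ^ n * exp (t ^ 2 * n / 8)) :=
        mul_le_mul (hsub t) hneg (by positivity) (by positivity)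
    _ = (2 ^ n) ^ 2 * exp (t ^ 2 * n / 4) := by
        rw [mul_mul_mul_comm, ← exp_add, ← sq]; ring_nf

theorem sum_exp_mul_sum_exp_neg_le_sq_rpow (hF : LipschitzWith 1 F) (h0 : ∑ x, F x = 0)
    (hn : 0 < n) (hs : s.Nonempty) {t : ℝ} (ht : 2 * n * t ^ 2 ≤ 1) :
    (∑ x ∈ s, exp (t * F x)) * ∑ x ∈ s, exp (-(t * F x)) ≤
      (#s * (2 * 2 ^ n / #s) ^ (2 * n * t ^ 2)) ^ 2 := by
  have hn' : (0 : ℝ) < n := by exact_mod_cast hn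
  have hrescale : ∀ x, (t * F x) ^ 2 = 2 * n * t ^ 2 * (F x ^ 2 / (2 * n)) := fun x => by
    field_simp
  calc (∑ x ∈ s, exp (t * F x)) * ∑ x ∈ s, exp (-(t * F x))
      ≤ (∑ x ∈ s, exp ((t * F x) ^ 2)) ^ 2 := sum_exp_mul_sum_exp_neg_le_sq s _
    _ ≤ (#s * (2 * 2 ^ n / #s) ^ (2 * n * t ^ 2)) ^ 2 := by
        gcongr
        simp only [hrescale]
        refine (sum_exp_mul_le_card_mul_rpow s _ hs (by positivity) ht).trans ?_
        gcongr
        exact (sum_le_univ_sum_of_nonneg fun _ => (exp_pos _).le).trans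
          (hF.sum_exp_sq_div_le h0 hn)

theorem sum_exp_mul_sum_exp_neg_le (hF : LipschitzWith 1 F) (h0 : ∑ x, F x = 0)
    (hs : s.Nonempty) (t : ℝ) :
    (∑ x ∈ s, exp (t * F x)) * ∑ x ∈ s, exp (-(t * F x)) ≤
      #s ^ 2 * exp (4 * n * (1 + log (2 ^ n / #s)) * t ^ 2) := by
  have hcard₀ : (0 : ℝ) < #s := by exact_mod_cast hs.card_pos
  set L := log (2 ^ n / #s)
  have hL : 0 ≤ L := log_nonneg (one_le_two_pow_div_card hs)
  have h2n : (2 : ℝ) ^ n / #s = exp L := (exp_log (by positivity)).symm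
  rcases n.eq_zero_or_pos with rfl | hn
  · refine (hF.sum_exp_mul_sum_exp_neg_le_sq_mul_exp h0 s t).trans ?_
    simpa using hs
  by_cases ht : 1 ≤ 2 * n * t ^ 2
  · refine (hF.sum_exp_mul_sum_exp_neg_le_sq_mul_exp h0 s t).trans ?_
    have h2n' : (2 : ℝ) ^ n = #s * exp L := by rw [← h2n, mul_div_cancel₀ _ hcard₀.ne']
    rw [h2n', mul_pow, ← exp_nat_mul, mul_assoc, ← exp_add]
    refine mul_le_mul_of_nonneg_left (exp_le_exp.2 ?_) (sq_nonneg _)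
    push_cast
    nlinarith [mul_nonneg hL (sub_nonneg.2 ht)]
  · refine (hF.sum_exp_mul_sum_exp_neg_le_sq_rpow h0 hn hs (not_le.1 ht).le).trans ?_
    rw [mul_div_assoc, h2n, rpow_def_of_pos (by positivity),
      log_mul two_ne_zero (exp_pos _).ne', log_exp, mul_pow, ← exp_nat_mul]
    refine mul_le_mul_of_nonneg_left (exp_le_exp.2 ?_) (sq_nonneg _)
    have hnt : 0 ≤ (n : ℝ) * t ^ 2 := by positivity
    push_cast
    nlinarith [log_two_lt_d9]

theorem sum_exp_mul_le_card_mul (hF : LipschitzWith 1 F) (hs : s.Nonempty)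
    (h0 : ∑ x ∈ s, F x = 0) (t : ℝ) :
    ∑ x ∈ s, exp (t * F x) ≤ #s * exp (4 * n * (1 + log (2 ^ n / #s)) * t ^ 2) := by
  set m := (∑ x, F x) / 2 ^ n
  have hG : LipschitzWith 1 fun x => F x - m := by simpa using hF.sub (LipschitzWith.const m)
  have hG0 : ∑ x, (F x - m) = 0 := by
    simp [sum_sub_distrib, card_hamming_fin_bool, m, mul_div_cancel₀]
  have hshift : ∀ u, ∑ x ∈ s, exp (u * F x) = exp (u * m) * ∑ x ∈ s, exp (u * (F x - m)) :=
    fun u => by simp only [mul_sum, ← exp_add, mul_sub, add_sub_cancel]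
  have hcard : (0 : ℝ) < #s := by exact_mod_cast hs.card_pos
  have hmean : (#s : ℝ) ≤ ∑ x ∈ s, exp (-t * F x) :=
    card_le_sum_exp_of_sum_eq_zero s _ (by rw [← mul_sum, h0, mul_zero])
  refine le_of_mul_le_mul_left ?_ hcard
  calc #s * ∑ x ∈ s, exp (t * F x) ≤ (∑ x ∈ s, exp (t * F x)) * ∑ x ∈ s, exp (-t * F x) := by
        rw [mul_comm]; gcongr
    _ = (∑ x ∈ s, exp (t * (F x - m))) * ∑ x ∈ s, exp (-(t * (F x - m))) := by
        rw [hshift, hshift, mul_mul_mul_comm, ← exp_add]; simp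
    _ ≤ #s ^ 2 * exp (4 * n * (1 + log (2 ^ n / #s)) * t ^ 2) :=
        hG.sum_exp_mul_sum_exp_neg_le hG0 hs t
    _ = #s * (#s * exp (4 * n * (1 + log (2 ^ n / #s)) * t ^ 2)) := by ring

theorem exists_extension_real {α : Type*} [PseudoMetricSpace α] {A : Set α}
    {K : NNReal} {f : A → ℝ} (hf : LipschitzWith K f) :
    ∃ F : α → ℝ, LipschitzWith K F ∧ ∀ x : A, F x = f x := by
  classical
  set f₀ : α → ℝ := fun x => if h : x ∈ A then f ⟨x, h⟩ else 0
  have hf₀ : A.domRestrict f₀ = f := funext fun x => dif_pos x.2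
  obtain ⟨F, hF, hFf⟩ := ((lipschitzOnWith_iff_restrict (f := f₀)).2 (hf₀ ▸ hf)).extend_real
  exact ⟨F, hF, fun x => by simpa [f₀] using (hFf x.2).symm⟩

end LipschitzWith

instance {ι : Type*} {β : ι → Type*} : DiscreteMeasurableSpace (Hamming β) :=
  ⟨fun _ => MeasurableSpace.measurableSet_top⟩

instance {M : Type*} [MeasurableSpace M] (μ : Measure M) (A : Set M) :
    IsFiniteMeasure (restrictedMeasure μ A) := by
  unfold restrictedMeasure; infer_instance

theorem restrictedMeasure_real_singleton {M : Type*} [MeasurableSpace M]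
    [MeasurableSingletonClass M] (μ : Measure M) {A : Set M} (hA : MeasurableSet A) (x : A) :
    (restrictedMeasure μ A).real {x} = μ.real {x.1} / μ.real A := by
  rw [Measure.real, restrictedMeasure, (MeasurableEmbedding.subtype_coe hA).comap_apply,
    Set.image_singleton, ProbabilityTheory.cond_apply hA, Set.inter_singleton_of_mem x.2,
    ENNReal.toReal_mul, ENNReal.toReal_inv, Measure.real, Measure.real, inv_mul_eq_div]

theorem uniformCube_toReal {n : ℕ} (B : Set (𝐇 n)) [Fintype B] :
    (uniformCube n B).toReal = #B.toFinset / 2 ^ n := by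
  simp [uniformCube, Measure.count_apply_finite _ B.toFinite, card_hamming_fin_bool,
    div_eq_mul_inv, mul_comm]

theorem integral_restrictedMeasure_uniformCube {n : ℕ} (A : Set (𝐇 n)) [Fintype A]
    (g : 𝐇 n → ℝ) :
    ∫ x, g x ∂(restrictedMeasure (uniformCube n) A) = (∑ x ∈ A.toFinset, g x) / #A.toFinset := by
  rw [integral_fintype .of_finite, ← sum_set_coe, sum_div]
  refine sum_congr rfl fun x _ => ?_
  rw [restrictedMeasure_real_singleton _ (.of_discrete), Measure.real, Measure.real,
    uniformCube_toReal, uniformCube_toReal]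
  simp only [Set.toFinset_singleton, card_singleton, Nat.cast_one, smul_eq_mul]
  rw [div_div_eq_mul_div, one_div_mul_cancel (by positivity), one_div_mul_eq_div]

/-- **Corollary 5.4.** There is a universal constant `c` (independent of `n` and `A`)
such that for any non-empty `A ⊂ {0,1}ⁿ`, the subgaussian constant of the normalized
restricted measure `μ_A` (w.r.t. the Hamming distance) satisfies
`σ²(μ_A) ≤ c·n·log(e/μ(A))`. -/
theorem hypercube_subgaussian_restricted :
    ∃ c : ℝ, 0 < c ∧
      ∀ (n : ℕ) (A : Set (Hamming fun _ : Fin n => Bool)), A.Nonempty →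
        subgaussianConst (restrictedMeasure (uniformCube n) A) ≤
          c * n * Real.log (Real.exp 1 / (uniformCube n A).toReal) := by
  classical
  refine ⟨8, by norm_num, fun n A hA => ?_⟩
  have hs : A.toFinset.Nonempty := Set.toFinset_nonempty.2 hA
  have hcard : (0 : ℝ) < #A.toFinset := by exact_mod_cast hs.card_pos
  have hlog : log (exp 1 / (uniformCube n A).toReal) = 1 + log (2 ^ n / #A.toFinset) := by
    rw [uniformCube_toReal, div_div_eq_mul_div, mul_div_assoc,
      log_mul (exp_pos 1).ne' (by positivity), log_exp]
  have hL := log_nonneg (one_le_two_pow_div_card hs)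
  rw [hlog]
  refine csInf_le ⟨0, fun _ h => h.1⟩ ⟨by positivity, fun f hf hmean t => ?_⟩
  obtain ⟨F, hF, hFf⟩ := hf.exists_extension_real
  simp only [← hFf] at hmean ⊢
  rw [integral_restrictedMeasure_uniformCube, div_eq_zero_iff, or_iff_left hcard.ne'] at hmean
  rw [integral_restrictedMeasure_uniformCube A fun x => exp (t * F x), div_le_iff₀ hcard,
    mul_comm]
  refine (hF.sum_exp_mul_le_card_mul hs hmean t).trans_eq ?_
  ring_nf
end

section
/- Let (M,d,μ) be a separable metric probability space with finite subgaussian constant σ²(μ). Equip the product space Mⁿ with the ℓ¹-type metric dₙ(x,y) = Σ_{i=1}^n d(xᵢ,yᵢ) and the product measure μⁿ. Then the subgaussian constant of (Mⁿ, dₙ, μⁿ) equals n times that of (M,d,μ): σ²(μⁿ) = n·σ²(μ). -/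
open MeasureTheory Real Filter

noncomputable instance piLpMeasurableSpace {n : ℕ} {M : Type*} [MeasurableSpace M] :
    MeasurableSpace (PiLp 1 fun _ : Fin n => M) :=
  MeasurableSpace.pi.comap WithLp.ofLp

/-- The product measure `μⁿ` on `Mⁿ`, the latter equipped with the ℓ¹-type metric
`dₙ(x,y) = Σᵢ d(xᵢ,yᵢ)` (realized as `PiLp 1`). -/
noncomputable def piMeasureL1 {M : Type*} [MeasurableSpace M] (μ : Measure M) (n : ℕ) :
    Measure (PiLp 1 fun _ : Fin n => M) :=
  (Measure.pi fun _ : Fin n => μ).map (WithLp.toLp 1)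

/-!
Upper bound (tensorization): if `F` on `X × Y` is 1-Lipschitz in each variable, then
`G y = ∫ F(x, y) dμ(x)` is 1-Lipschitz, and integrating first in `x` gives
`∫ e^{tF} ≤ e^{s t²/2} ∫ e^{tG} dν ≤ e^{t ∫F} e^{(s + s') t²/2}`. Since `Mⁿ⁺¹ = M × Mⁿ`
isometrically for the ℓ¹ metrics, induction gives the bound `n σ²(μ)` for `μⁿ`.

Lower bound: for 1-Lipschitz `f` on `M`, `F z = Σᵢ f(zᵢ)` is 1-Lipschitz for the ℓ¹ metric and
`∫ e^{tF} dμⁿ = (∫ e^{tf} dμ)ⁿ`, so a bound `σ²` for `μⁿ` yields the bound `σ²/n` for `μ`.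

Both arguments need `f` bounded and measurable. Since the Bochner integral of a non-integrable
function is `0`, the definition also constrains other `f`; these are reached by truncation and
monotone convergence.
-/

open Topology
open scoped Pointwise

section Integrals

lemma eventually_min_natCast_eq (a : ℝ) : ∀ᶠ j : ℕ in atTop, min a j = a :=
  (eventually_ge_atTop ⌈a⌉₊).mono fun _ hj =>
    min_eq_left ((Nat.le_ceil a).trans (by exact_mod_cast hj))

lemma eventually_max_neg_natCast_eq (a : ℝ) : ∀ᶠ k : ℕ in atTop, max a (-k) = a :=
  (eventually_min_natCast_eq (-a)).mono fun k hk => by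
    rw [← neg_neg a, max_neg_neg, hk]

variable {α : Type*} [MeasurableSpace α] {ν : Measure α}

lemma tendsto_integral_max_neg_natCast [IsFiniteMeasure ν] {f : α → ℝ} (hf : Integrable f ν) :
    Tendsto (fun k : ℕ => ∫ x, max (f x) (-k) ∂ν) atTop (𝓝 (∫ x, f x ∂ν)) :=
  integral_tendsto_of_tendsto_of_antitone (fun _ => hf.sup (integrable_const _)) hf
    (ae_of_all _ fun x k l hkl => max_le_max le_rfl (neg_le_neg (by exact_mod_cast hkl)))
    (ae_of_all _ fun x => tendsto_const_nhds.congr'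
      ((eventually_max_neg_natCast_eq (f x)).mono fun _ h => h.symm))

lemma tendsto_integral_min_natCast_atTop [IsFiniteMeasure ν] {g : α → ℝ}
    (hgm : AEStronglyMeasurable g ν) (hg0 : ∀ x, 0 ≤ g x) (hg : ¬ Integrable g ν) :
    Tendsto (fun j : ℕ => ∫ x, min (g x) j ∂ν) atTop atTop := by
  have hint : ∀ j : ℕ, Integrable (fun x => min (g x) j) ν := fun j =>
    Integrable.of_bound (hgm.inf aestronglyMeasurable_const) j
      (ae_of_all _ fun x => by
        rw [Real.norm_eq_abs, abs_of_nonneg (le_min (hg0 x) j.cast_nonneg)]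
        exact min_le_right _ _)
  have hlin : Tendsto (fun j : ℕ => ∫⁻ x, ENNReal.ofReal (min (g x) j) ∂ν) atTop
      (𝓝 (∫⁻ x, ENNReal.ofReal (g x) ∂ν)) :=
    lintegral_tendsto_of_tendsto_of_monotone
      (fun j => (hint j).aemeasurable.ennreal_ofReal)
      (ae_of_all _ fun x j l hjl =>
        ENNReal.ofReal_le_ofReal (min_le_min le_rfl (by exact_mod_cast hjl)))
      (ae_of_all _ fun x => tendsto_const_nhds.congr'
        ((eventually_min_natCast_eq (g x)).mono fun j hj => by simp only [hj]))
  rw [not_not.mp (mt (lintegral_ofReal_ne_top_iff_integrable hgm (ae_of_all _ hg0)).mp hg)]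
    at hlin
  simp_rw [← ofReal_integral_eq_lintegral_ofReal (hint _)
    (ae_of_all _ fun x => le_min (hg0 x) (Nat.cast_nonneg _))] at hlin
  exact ENNReal.tendsto_ofReal_nhds_top.mp hlin

lemma max_neg_eq_max_zero_sub_min (a : ℝ) {k : ℝ} (hk : 0 ≤ k) :
    max a (-k) = max a 0 - min (max (-a) 0) k := by
  simp only [max_def, min_def]
  split_ifs <;> linarith

lemma tendsto_integral_max_neg_natCast_atBot [IsFiniteMeasure ν] {f : α → ℝ}
    (hfm : AEStronglyMeasurable f ν) (hpos : Integrable (fun x => max (f x) 0) ν)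
    (hf : ¬ Integrable f ν) :
    Tendsto (fun k : ℕ => ∫ x, max (f x) (-k) ∂ν) atTop atBot := by
  have hnegm : AEStronglyMeasurable (fun x => max (-f x) 0) ν :=
    hfm.neg.sup aestronglyMeasurable_const
  have hneg : ¬ Integrable (fun x => max (-f x) 0) ν := fun h =>
    hf ((hpos.sub h).congr (ae_of_all _ fun x => max_zero_sub_max_neg_zero_eq_self (f x)))
  have hmin := tendsto_integral_min_natCast_atTop hnegm (fun x => le_max_right _ _) hneg
  refine (tendsto_atBot_add_const_left _ (∫ x, max (f x) 0 ∂ν)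
    (tendsto_neg_atTop_atBot.comp hmin)).congr fun k => ?_
  have hmin_int : Integrable (fun x => min (max (-f x) 0) (k : ℝ)) ν :=
    Integrable.of_bound (hnegm.inf aestronglyMeasurable_const) k (ae_of_all _ fun x => by
      rw [Real.norm_eq_abs, abs_of_nonneg (le_min (le_max_right _ _) k.cast_nonneg)]
      exact min_le_right _ _)
  simp_rw [max_neg_eq_max_zero_sub_min _ k.cast_nonneg, integral_sub hpos hmin_int]
  simp [sub_eq_add_neg]

lemma aestronglyMeasurable_of_integrable_exp_mul {f : α → ℝ} {t : ℝ} (ht : t ≠ 0)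
    (h : Integrable (fun x => exp (t * f x)) ν) : AEStronglyMeasurable f ν :=
  ((h.aemeasurable.log.const_mul t⁻¹).congr
    (ae_of_all _ fun x => by simp [log_exp, ht])).aestronglyMeasurable

lemma integrable_exp_mul_of_abs_le [IsFiniteMeasure ν] {f : α → ℝ}
    (hfm : AEStronglyMeasurable f ν) {C : ℝ} (hC : ∀ᵐ x ∂ν, |f x| ≤ C) (t : ℝ) :
    Integrable (fun x => exp (t * f x)) ν :=
  Integrable.of_bound (continuous_exp.comp_aestronglyMeasurable (hfm.const_mul t)) (exp (|t| * C))
    (hC.mono fun x hx => by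
      rw [Real.norm_eq_abs, abs_of_pos (exp_pos _), exp_le_exp]
      calc t * f x ≤ |t| * |f x| := by rw [← abs_mul]; exact le_abs_self _
        _ ≤ |t| * C := mul_le_mul_of_nonneg_left hx (abs_nonneg t))

lemma le_exp_mul_div (a : ℝ) {t : ℝ} (ht : 0 < t) : a ≤ exp (t * a) / t := by
  rw [le_div_iff₀ ht]
  linarith [add_one_le_exp (t * a), mul_comm a t]

end Integrals

section Subgaussian

variable {α : Type*} [PseudoMetricSpace α] [MeasurableSpace α] {ν : Measure α}
  [IsProbabilityMeasure ν] {σ2 : ℝ}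

lemma isSubgaussianBound_zero [Subsingleton α] : IsSubgaussianBound ν 0 := by
  refine ⟨le_rfl, fun f _ hmean t => ?_⟩
  have hf : ∀ x, f x = 0 := fun x => by
    rw [← hmean, show f = fun _ => f x from funext fun y => congrArg f (Subsingleton.elim y x)]
    simp
  simp [hf]

lemma subgaussianConst_eq_zero [Subsingleton α] : subgaussianConst ν = 0 :=
  le_antisymm (csInf_le ⟨0, fun _ h => h.1⟩ isSubgaussianBound_zero)
    (le_csInf ⟨0, isSubgaussianBound_zero⟩ fun _ h => h.1)

lemma IsSubgaussianBound.integral_exp_le (h : IsSubgaussianBound ν σ2) {f : α → ℝ}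
    (hf : LipschitzWith 1 f) (t : ℝ) :
    ∫ x, exp (t * f x) ∂ν ≤ exp (t * ∫ x, f x ∂ν) * exp (σ2 * t ^ 2 / 2) := by
  set m := ∫ x, f x ∂ν
  have hcentered : ∫ x, (f x - m) ∂ν = 0 := by
    simpa [average_eq_integral] using integral_sub_average ν f
  have hlip : LipschitzWith 1 fun x => f x - m := by
    simpa using hf.sub (LipschitzWith.const m)
  calc ∫ x, exp (t * f x) ∂ν = ∫ x, exp (t * m) * exp (t * (f x - m)) ∂ν := by
        simp_rw [← exp_add]; ring_nf
    _ = exp (t * m) * ∫ x, exp (t * (f x - m)) ∂ν := integral_const_mul _ _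
    _ ≤ exp (t * m) * exp (σ2 * t ^ 2 / 2) :=
        mul_le_mul_of_nonneg_left (h.2 _ hlip hcentered t) (exp_pos _).le

variable (ν σ2) in
def IsSubgaussianBoundOnBounded : Prop :=
  ∀ f : α → ℝ, LipschitzWith 1 f → (∃ C, ∀ x, |f x| ≤ C) → AEStronglyMeasurable f ν →
    ∀ t : ℝ, ∫ x, exp (t * f x) ∂ν ≤ exp (t * ∫ x, f x ∂ν) * exp (σ2 * t ^ 2 / 2)

lemma IsSubgaussianBoundOnBounded.integral_exp_le_of_bddBelow
    (H : IsSubgaussianBoundOnBounded ν σ2) {f : α → ℝ} (hf : LipschitzWith 1 f) {k : ℝ}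
    (hk : ∀ x, k ≤ f x) {t : ℝ} (ht : 0 < t)
    (hexp : Integrable (fun x => exp (t * f x)) ν) :
    ∫ x, exp (t * f x) ∂ν ≤ exp (t * ∫ x, f x ∂ν) * exp (σ2 * t ^ 2 / 2) := by
  have hfm := aestronglyMeasurable_of_integrable_exp_mul ht.ne' hexp
  have hfi : Integrable f ν :=
    ((integrable_const |k|).add (hexp.div_const t)).mono' hfm (ae_of_all _ fun x => by
      rw [Real.norm_eq_abs, abs_le, Pi.add_apply]
      constructor
      · linarith [neg_abs_le k, hk x, div_nonneg (exp_pos (t * f x)).le ht.le]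
      · linarith [abs_nonneg k, le_exp_mul_div (f x) ht])
  have hmin_bound : ∀ (j : ℕ) x, |min (f x) j| ≤ |k| + j := fun j x => by
    have hk0 := abs_nonneg k
    have hj0 := j.cast_nonneg (α := ℝ)
    exact abs_le.2 ⟨le_min (by linarith [neg_abs_le k, hk x]) (by linarith),
      (min_le_right _ _).trans (by linarith)⟩
  have hminm : ∀ j : ℕ, AEStronglyMeasurable (fun x => min (f x) j) ν :=
    fun j => hfm.inf aestronglyMeasurable_const
  have hmin : ∀ j : ℕ, ∫ x, exp (t * min (f x) j) ∂ν ≤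
      exp (t * ∫ x, f x ∂ν) * exp (σ2 * t ^ 2 / 2) := fun j => by
    refine (H _ (hf.min_const j) ⟨_, hmin_bound j⟩ (hminm j) t).trans ?_
    refine mul_le_mul_of_nonneg_right (exp_le_exp.2 (mul_le_mul_of_nonneg_left ?_ ht.le))
      (exp_pos _).le
    exact integral_mono ((integrable_const _).mono' (hminm j)
      (ae_of_all _ (hmin_bound j))) hfi fun x => min_le_left _ _
  refine le_of_tendsto' (integral_tendsto_of_tendsto_of_monotone
    (fun j => integrable_exp_mul_of_abs_le (hminm j) (ae_of_all _ (hmin_bound j)) t) hexp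
    (ae_of_all _ fun x j l hjl => ?_) (ae_of_all _ fun x => ?_)) hmin
  · exact exp_le_exp.2
      (mul_le_mul_of_nonneg_left (min_le_min le_rfl (by exact_mod_cast hjl)) ht.le)
  · exact tendsto_const_nhds.congr' ((eventually_min_natCast_eq (f x)).mono fun j hj => by
      simp only [hj])

theorem IsSubgaussianBoundOnBounded.isSubgaussianBound (H : IsSubgaussianBoundOnBounded ν σ2)
    (h0 : 0 ≤ σ2) : IsSubgaussianBound ν σ2 := by
  suffices key : ∀ f : α → ℝ, LipschitzWith 1 f → ∫ x, f x ∂ν = 0 → ∀ t : ℝ, 0 < t →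
      ∫ x, exp (t * f x) ∂ν ≤ exp (σ2 * t ^ 2 / 2) by
    refine ⟨h0, fun f hf hmean t => ?_⟩
    rcases lt_trichotomy t 0 with ht | rfl | ht
    · simpa using key (fun x => -f x) hf.neg (by rw [integral_neg, hmean, neg_zero]) (-t)
        (neg_pos.2 ht)
    · simp
    · exact key f hf hmean t ht
  intro f hf hmean t ht
  by_cases hexp : Integrable (fun x => exp (t * f x)) ν
  swap
  · rw [integral_undef hexp]
    positivity
  have hfm := aestronglyMeasurable_of_integrable_exp_mul ht.ne' hexp
  -- `f` need not be integrable, but it is dominated by each of its lower truncations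
  have htrunc : ∀ k : ℕ, ∫ x, exp (t * f x) ∂ν ≤
      exp (t * ∫ x, max (f x) (-k) ∂ν) * exp (σ2 * t ^ 2 / 2) := fun k => by
    have hexpk : Integrable (fun x => exp (t * max (f x) (-k))) ν :=
      (hexp.add (integrable_const (exp (t * -k)))).mono'
        (continuous_exp.comp_aestronglyMeasurable
          ((hfm.sup aestronglyMeasurable_const).const_mul t))
        (ae_of_all _ fun x => by
          rw [Real.norm_eq_abs, abs_of_pos (exp_pos _), Pi.add_apply,
            mul_max_of_nonneg _ _ ht.le, exp_monotone.map_max]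
          exact max_le_add_of_nonneg (exp_pos _).le (exp_pos _).le)
    calc ∫ x, exp (t * f x) ∂ν ≤ ∫ x, exp (t * max (f x) (-k)) ∂ν :=
          integral_mono hexp hexpk fun x =>
            exp_le_exp.2 (mul_le_mul_of_nonneg_left (le_max_left _ _) ht.le)
      _ ≤ _ :=
          H.integral_exp_le_of_bddBelow (hf.max_const _) (fun x => le_max_right _ _) ht hexpk
  by_cases hfi : Integrable f ν
  · have hlim := tendsto_integral_max_neg_natCast hfi
    rw [hmean] at hlim
    have hlim' := ((continuous_exp.tendsto _).comp (hlim.const_mul t)).mul_const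
      (exp (σ2 * t ^ 2 / 2))
    rw [mul_zero, exp_zero, one_mul] at hlim'
    exact ge_of_tendsto' hlim' htrunc
  · have hpos : Integrable (fun x => max (f x) 0) ν :=
      (hexp.div_const t).mono' (hfm.sup aestronglyMeasurable_const) (ae_of_all _ fun x => by
        rw [Real.norm_eq_abs, abs_of_nonneg (le_max_right _ _)]
        exact max_le (le_exp_mul_div (f x) ht) (div_nonneg (exp_pos _).le ht.le))
    have hlim := (tendsto_exp_atBot.comp ((tendsto_integral_max_neg_natCast_atBot hfm hpos
      hfi).const_mul_atBot ht)).mul_const (exp (σ2 * t ^ 2 / 2))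
    rw [zero_mul] at hlim
    exact (ge_of_tendsto' hlim htrunc).trans (exp_pos _).le

end Subgaussian

lemma lipschitzOnWith_integral {α β : Type*} [MeasurableSpace α] [PseudoMetricSpace β]
    {μ : Measure α} [IsProbabilityMeasure μ] {F : α → β → ℝ} {K : NNReal}
    (hF : ∀ a, LipschitzWith K (F a)) :
    LipschitzOnWith K (fun b => ∫ a, F a b ∂μ) {b | Integrable (fun a => F a b) μ} := by
  refine LipschitzOnWith.of_dist_le_mul fun b hb b' hb' => ?_
  rw [dist_eq_norm, ← integral_sub hb hb']
  refine (norm_integral_le_of_norm_le_const (C := K * dist b b') (ae_of_all _ fun a => ?_)).trans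
    (by simp)
  rw [← dist_eq_norm]
  exact (hF a).dist_le_mul b b'

section Product

variable {X Y : Type*} [PseudoMetricSpace X] [PseudoMetricSpace Y] [MeasurableSpace X]
  [MeasurableSpace Y] {μ : Measure X} {ν : Measure Y} [IsProbabilityMeasure μ]
  [IsProbabilityMeasure ν] {s s' : ℝ}

theorem integral_exp_prod_le (hμ : IsSubgaussianBound μ s) (hν : IsSubgaussianBound ν s')
    {F : X × Y → ℝ} (hFx : ∀ y, LipschitzWith 1 fun x => F (x, y))
    (hFy : ∀ x, LipschitzWith 1 fun y => F (x, y)) {C : ℝ} (hC : ∀ p, |F p| ≤ C)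
    (hFm : AEStronglyMeasurable F (μ.prod ν)) (t : ℝ) :
    ∫ p, exp (t * F p) ∂(μ.prod ν) ≤
      exp (t * ∫ p, F p ∂(μ.prod ν)) * exp ((s + s') * t ^ 2 / 2) := by
  have hFi : Integrable F (μ.prod ν) := Integrable.of_bound hFm C (ae_of_all _ hC)
  set g := fun y => ∫ x, F (x, y) ∂μ
  -- `g` is 1-Lipschitz only where the sections of `F` are integrable; McShane extends it
  obtain ⟨G, hG, hGg⟩ :=
    (lipschitzOnWith_integral (μ := μ) (F := fun x y => F (x, y)) hFy).extend_real
  have hGae : G =ᵐ[ν] g := hFi.prod_left_ae.mono fun y hy => (hGg hy).symm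
  have hg_bound : ∀ y, |g y| ≤ C := fun y => by
    simpa using norm_integral_le_of_norm_le_const (μ := μ) (f := fun x => F (x, y))
      (ae_of_all _ fun x => hC (x, y))
  have hGi : Integrable (fun y => exp (t * G y)) ν :=
    integrable_exp_mul_of_abs_le (hFi.integral_prod_right.aestronglyMeasurable.congr hGae.symm)
      (hGae.mono fun y hy => hy ▸ hg_bound y) t
  have hinner : ∀ᵐ y ∂ν, ∫ x, exp (t * F (x, y)) ∂μ ≤ exp (t * G y) * exp (s * t ^ 2 / 2) :=
    hGae.mono fun y hy => by rw [hy]; exact hμ.integral_exp_le (hFx y) t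
  have hmean : ∫ y, G y ∂ν = ∫ p, F p ∂(μ.prod ν) := by
    rw [integral_congr_ae hGae, integral_prod_symm F hFi]
  calc ∫ p, exp (t * F p) ∂(μ.prod ν) = ∫ y, ∫ x, exp (t * F (x, y)) ∂μ ∂ν :=
        integral_prod_symm _ (integrable_exp_mul_of_abs_le hFm (ae_of_all _ hC) t)
    _ ≤ ∫ y, exp (t * G y) * exp (s * t ^ 2 / 2) ∂ν :=
        integral_mono_of_nonneg (ae_of_all _ fun y => integral_nonneg fun x => (exp_pos _).le)
          (hGi.mul_const _) hinner
    _ = (∫ y, exp (t * G y) ∂ν) * exp (s * t ^ 2 / 2) := integral_mul_const _ _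
    _ ≤ exp (t * ∫ y, G y ∂ν) * exp (s' * t ^ 2 / 2) * exp (s * t ^ 2 / 2) :=
        mul_le_mul_of_nonneg_right (hν.integral_exp_le hG t) (exp_pos _).le
    _ = exp (t * ∫ p, F p ∂(μ.prod ν)) * exp ((s + s') * t ^ 2 / 2) := by
        rw [hmean, mul_assoc, ← exp_add]
        ring_nf

theorem IsSubgaussianBound.of_measurePreserving_prod {Z : Type*} [PseudoMetricSpace Z]
    [MeasurableSpace Z] {ρ : Measure Z} [IsProbabilityMeasure ρ] (hμ : IsSubgaussianBound μ s)
    (hν : IsSubgaussianBound ν s') (e : X × Y ≃ᵐ Z) (he : MeasurePreserving e (μ.prod ν) ρ)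
    (hex : ∀ y, LipschitzWith 1 fun x => e (x, y))
    (hey : ∀ x, LipschitzWith 1 fun y => e (x, y)) :
    IsSubgaussianBound ρ (s + s') := by
  refine IsSubgaussianBoundOnBounded.isSubgaussianBound (fun f hf ⟨C, hC⟩ hfm t => ?_)
    (add_nonneg hμ.1 hν.1)
  have := integral_exp_prod_le hμ hν (F := fun p => f (e p))
    (fun y => by simpa [Function.comp_def] using hf.comp (hex y))
    (fun x => by simpa [Function.comp_def] using hf.comp (hey x))
    (fun p => hC (e p)) (hfm.comp_measurePreserving he) t
  rwa [he.integral_comp' (fun z => exp (t * f z)), he.integral_comp' f] at this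

end Product

lemma dist_piLp_one {ι : Type*} [Fintype ι] {β : ι → Type*} [∀ i, PseudoMetricSpace (β i)]
    (x y : PiLp 1 β) : dist x y = ∑ i, dist (x i) (y i) := by
  rw [PiLp.dist_eq_sum (by norm_num)]
  simp

lemma lipschitzWith_sum_apply {M : Type*} [PseudoMetricSpace M] {f : M → ℝ}
    (hf : LipschitzWith 1 f) (n : ℕ) :
    LipschitzWith 1 fun z : PiLp 1 (fun _ : Fin n => M) => ∑ i, f (z i) := by
  refine LipschitzWith.of_dist_le_mul fun z z' => ?_
  rw [NNReal.coe_one, one_mul, Real.dist_eq, ← Finset.sum_sub_distrib, dist_piLp_one]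
  refine (Finset.abs_sum_le_sum_abs _ _).trans (Finset.sum_le_sum fun i _ => ?_)
  simpa [Real.dist_eq] using hf.dist_le_mul (z i) (z' i)

section PiLp

variable {M : Type*} [MeasurableSpace M]

lemma measurePreserving_toLp_piMeasureL1 (μ : Measure M) (n : ℕ) :
    MeasurePreserving (MeasurableEquiv.toLp 1 (Fin n → M)) (Measure.pi fun _ => μ)
      (piMeasureL1 μ n) :=
  ⟨(MeasurableEquiv.toLp 1 _).measurable, rfl⟩

instance (μ : Measure M) [IsProbabilityMeasure μ] (n : ℕ) :
    IsProbabilityMeasure (piMeasureL1 μ n) :=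
  Measure.isProbabilityMeasure_map (MeasurableEquiv.toLp 1 _).measurable.aemeasurable

variable (M) in
noncomputable def piLpConsEquiv (n : ℕ) :
    M × PiLp 1 (fun _ : Fin n => M) ≃ᵐ PiLp 1 (fun _ : Fin (n + 1) => M) :=
  ((MeasurableEquiv.refl M).prodCongr (MeasurableEquiv.toLp 1 _).symm).trans
    ((MeasurableEquiv.piFinSuccAbove (fun _ => M) 0).symm.trans (MeasurableEquiv.toLp 1 _))

lemma piLpConsEquiv_apply {n : ℕ} (y : M) (z : PiLp 1 fun _ : Fin n => M) (i : Fin (n + 1)) :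
    piLpConsEquiv M n (y, z) i = Fin.cons (α := fun _ => M) y z.ofLp i := by
  simp [piLpConsEquiv, MeasurableEquiv.piFinSuccAbove_symm_apply, Fin.insertNthEquiv]
  rfl

lemma measurePreserving_piLpConsEquiv (μ : Measure M) [IsProbabilityMeasure μ] (n : ℕ) :
    MeasurePreserving (piLpConsEquiv M n) (μ.prod (piMeasureL1 μ n)) (piMeasureL1 μ (n + 1)) :=
  (measurePreserving_toLp_piMeasureL1 μ (n + 1)).comp
    ((measurePreserving_piFinSuccAbove (fun _ => μ) 0).symm _ |>.comp
      ((MeasurePreserving.id μ).prod (measurePreserving_toLp_piMeasureL1 μ n).symm))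

variable [PseudoMetricSpace M]

lemma dist_piLpConsEquiv {n : ℕ} (y y' : M) (z z' : PiLp 1 fun _ : Fin n => M) :
    dist (piLpConsEquiv M n (y, z)) (piLpConsEquiv M n (y', z')) = dist y y' + dist z z' := by
  simp [dist_piLp_one, Fin.sum_univ_succ, piLpConsEquiv_apply]

variable {μ : Measure M} [IsProbabilityMeasure μ]

theorem IsSubgaussianBound.to_piMeasureL1 {s : ℝ} (h : IsSubgaussianBound μ s) (n : ℕ) :
    IsSubgaussianBound (piMeasureL1 μ n) (n * s) := by
  induction n with
  | zero => simpa using isSubgaussianBound_zero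
  | succ n ih =>
    have hbound := h.of_measurePreserving_prod ih (piLpConsEquiv M n)
      (measurePreserving_piLpConsEquiv μ n)
      (fun z => LipschitzWith.of_dist_le_mul fun y y' => by simp [dist_piLpConsEquiv])
      (fun y => LipschitzWith.of_dist_le_mul fun z z' => by simp [dist_piLpConsEquiv])
    convert hbound using 1
    push_cast
    ring

theorem IsSubgaussianBound.of_piMeasureL1 {n : ℕ} {σ2 : ℝ}
    (h : IsSubgaussianBound (piMeasureL1 μ n) σ2) (hn : n ≠ 0) :
    IsSubgaussianBound μ (σ2 / n) := by
  refine IsSubgaussianBoundOnBounded.isSubgaussianBound (fun f hf ⟨C, hC⟩ hfm t => ?_)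
    (div_nonneg h.1 n.cast_nonneg)
  have hfi : Integrable f μ := Integrable.of_bound hfm C (ae_of_all _ hC)
  have hsum := h.integral_exp_le (lipschitzWith_sum_apply hf n) t
  have hmean : ∫ z, ∑ i, f (z i) ∂(piMeasureL1 μ n) = n * ∫ x, f x ∂μ := by
    rw [← (measurePreserving_toLp_piMeasureL1 μ n).integral_comp']
    simp only [MeasurableEquiv.toLp_apply, PiLp.toLp_apply]
    rw [integral_finsetSum _ fun i _ => integrable_comp_eval (μ := fun _ : Fin n => μ) hfi]
    simp [integral_comp_eval (μ := fun _ : Fin n => μ) hfm]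
  have hprod :
      ∫ z, exp (t * ∑ i, f (z i)) ∂(piMeasureL1 μ n) = (∫ x, exp (t * f x) ∂μ) ^ n := by
    rw [← (measurePreserving_toLp_piMeasureL1 μ n).integral_comp']
    simpa [Finset.mul_sum, exp_sum] using
      integral_fintype_prod_eq_pow (ι := Fin n) (μ := μ) fun x => exp (t * f x)
  rw [hmean, hprod] at hsum
  refine (pow_le_pow_iff_left₀ (integral_nonneg fun _ => (exp_pos _).le) (by positivity) hn).1 ?_
  calc _ ≤ _ := hsum
    _ = (exp (t * ∫ x, f x ∂μ) * exp (σ2 / n * t ^ 2 / 2)) ^ n := by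
        rw [mul_pow, ← exp_nat_mul, ← exp_nat_mul]
        congr 2 <;> field_simp

lemma setOf_isSubgaussianBound_piMeasureL1 {n : ℕ} (hn : n ≠ 0) :
    {σ2 | IsSubgaussianBound (piMeasureL1 μ n) σ2} =
      (n : ℝ) • {σ2 | IsSubgaussianBound μ σ2} := by
  ext σ2
  refine ⟨fun h => ⟨σ2 / n, h.of_piMeasureL1 hn, ?_⟩, ?_⟩
  · simp [smul_eq_mul, mul_div_cancel₀ σ2 (Nat.cast_ne_zero.2 hn)]
  · rintro ⟨s, hs, rfl⟩
    exact hs.to_piMeasureL1 n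

end PiLp

theorem subgaussian_const_product_general {M : Type*} [MetricSpace M]
    [MeasurableSpace M]
    (μ : Measure M) [IsProbabilityMeasure μ]
    (n : ℕ) :
    subgaussianConst (piMeasureL1 μ n) = n * subgaussianConst μ := by
  rcases eq_or_ne n 0 with rfl | hn
  · rw [subgaussianConst_eq_zero, Nat.cast_zero, zero_mul]
  · rw [subgaussianConst, subgaussianConst, setOf_isSubgaussianBound_piMeasureL1 hn,
      Real.sInf_smul_of_nonneg n.cast_nonneg, smul_eq_mul]

/-- **Proposition 5.5.** For a separable metric probability space `(M,d,μ)` with finite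
subgaussian constant, the subgaussian constant of `(Mⁿ, dₙ, μⁿ)` with the ℓ¹-type
metric `dₙ` satisfies `σ²(μⁿ) = n·σ²(μ)`. -/
theorem subgaussian_const_product {M : Type*} [MetricSpace M]
    [TopologicalSpace.SeparableSpace M] [MeasurableSpace M]
    (μ : Measure M) [IsProbabilityMeasure μ]
    (hfin : ∃ σ2 : ℝ, IsSubgaussianBound μ σ2) (n : ℕ) :
    subgaussianConst (piMeasureL1 μ n) = n * subgaussianConst μ :=
  subgaussian_const_product_general μ n
end

section
/- Let f : ℝⁿ → ℝ be a convex function. For any L > 0, there exists a convex function g : ℝⁿ → ℝ such that g = f on the set A = {x ∈ ℝⁿ : |∇f(x)| ≤ L} and g is L-Lipschitz on all of ℝⁿ (i.e., |g(x) − g(y)| ≤ L|x − y| for all x, y). -/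
/-!
Take `g = inf_y (f y + L‖x - y‖)`, the largest `L`-Lipschitz minorant of `f`. It is
`L`-Lipschitz as an infimum of `L`-Lipschitz functions and convex because `(x, y) ↦ f y + L‖x - y‖`
is jointly convex. At a point `a` with `|∇f(a)| ≤ L`, convexity along the segment from `a` to `y`
gives `f a - f y ≤ |∇f(a)| ‖a - y‖ ≤ L ‖a - y‖`, i.e. `f` lies above the cone `f a - L‖a - ·‖`;
hence the infimum defining `g a` is attained at `y = a` and `g a = f a`.
-/

open MeasureTheory Real Filter

/-- The generalized modulus of the gradient
`|∇f(x)| = limsup_{y → x} |f(x) − f(y)|/d(x,y)`. -/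
noncomputable def gradMod {M : Type*} [PseudoMetricSpace M] (f : M → ℝ) (x : M) : ℝ :=
  Filter.limsup (fun y => |f x - f y| / dist x y) (nhdsWithin x {x}ᶜ)

open Set Topology AffineMap

noncomputable def lipschitzEnvelope {X : Type*} [PseudoMetricSpace X] (f : X → ℝ) (L : ℝ)
    (x : X) : ℝ :=
  ⨅ y, f y + L * dist x y

section PseudoMetricSpace

variable {X : Type*} [PseudoMetricSpace X] {f : X → ℝ} {L : ℝ}

lemma bddBelow_range_add_mul_dist_of_cone (hL : 0 ≤ L) {a : X}
    (ha : ∀ y, f a - L * dist a y ≤ f y) (x : X) :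
    BddBelow (range fun y => f y + L * dist x y) := by
  refine ⟨f a - L * dist a x, forall_mem_range.2 fun y => ?_⟩
  have := mul_le_mul_of_nonneg_left (dist_triangle a x y) hL
  linarith [ha y]

lemma lipschitzEnvelope_le
    (hbdd : ∀ x, BddBelow (range fun y => f y + L * dist x y)) (x y : X) :
    lipschitzEnvelope f L x ≤ f y + L * dist x y :=
  ciInf_le (hbdd x) y

lemma lipschitzEnvelope_eq_of_cone
    (hbdd : ∀ x, BddBelow (range fun y => f y + L * dist x y)) {x : X}
    (hx : ∀ y, f x - L * dist x y ≤ f y) :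
    lipschitzEnvelope f L x = f x :=
  have : Nonempty X := ⟨x⟩
  le_antisymm (by simpa using lipschitzEnvelope_le hbdd x x)
    (le_ciInf fun y => by linarith [hx y])

lemma lipschitzWith_lipschitzEnvelope
    (hbdd : ∀ x, BddBelow (range fun y => f y + L * dist x y)) (hL : 0 ≤ L) :
    LipschitzWith L.toNNReal (lipschitzEnvelope f L) := by
  refine LipschitzWith.of_le_add_mul' L fun x x' => ?_
  have : Nonempty X := ⟨x⟩
  have : lipschitzEnvelope f L x - L * dist x x' ≤ lipschitzEnvelope f L x' := by
    refine le_ciInf fun y => ?_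
    have := mul_le_mul_of_nonneg_left (dist_triangle x x' y) hL
    linarith [lipschitzEnvelope_le hbdd x y]
  linarith

end PseudoMetricSpace

section NormedSpace

variable {E : Type*} [NormedAddCommGroup E] [NormedSpace ℝ E] {f : E → ℝ} {L : ℝ}

lemma dist_smul_add_smul_le {s t : ℝ} (hs : 0 ≤ s) (ht : 0 ≤ t) (x₁ x₂ y₁ y₂ : E) :
    dist (s • x₁ + t • x₂) (s • y₁ + t • y₂) ≤ s * dist x₁ y₁ + t * dist x₂ y₂ := by
  calc dist (s • x₁ + t • x₂) (s • y₁ + t • y₂)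
      ≤ dist (s • x₁) (s • y₁) + dist (t • x₂) (t • y₂) := dist_add_add_le _ _ _ _
    _ = s * dist x₁ y₁ + t * dist x₂ y₂ := by
      rw [dist_smul₀, dist_smul₀, Real.norm_of_nonneg hs, Real.norm_of_nonneg ht]

lemma convexOn_lipschitzEnvelope (hf : ConvexOn ℝ univ f) (hL : 0 ≤ L)
    (hbdd : ∀ x, BddBelow (range fun y => f y + L * dist x y)) :
    ConvexOn ℝ univ (lipschitzEnvelope f L) := by
  refine ⟨convex_univ, fun x₁ _ x₂ _ s t hs ht hst => ?_⟩
  calc lipschitzEnvelope f L (s • x₁ + t • x₂)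
      ≤ (⨅ y, s * (f y + L * dist x₁ y)) + ⨅ y, t * (f y + L * dist x₂ y) := by
        refine le_ciInf_add_ciInf fun y₁ y₂ => ?_
        calc lipschitzEnvelope f L (s • x₁ + t • x₂)
            ≤ f (s • y₁ + t • y₂) + L * dist (s • x₁ + t • x₂) (s • y₁ + t • y₂) :=
              lipschitzEnvelope_le hbdd _ _
          _ ≤ s * f y₁ + t * f y₂ + L * (s * dist x₁ y₁ + t * dist x₂ y₂) :=
              add_le_add (hf.2 trivial trivial hs ht hst)
                (mul_le_mul_of_nonneg_left (dist_smul_add_smul_le hs ht _ _ _ _) hL)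
          _ = s * (f y₁ + L * dist x₁ y₁) + t * (f y₂ + L * dist x₂ y₂) := by ring
    _ = s • lipschitzEnvelope f L x₁ + t • lipschitzEnvelope f L x₂ := by
        rw [smul_eq_mul, smul_eq_mul, lipschitzEnvelope, lipschitzEnvelope,
          Real.mul_iInf_of_nonneg hs, Real.mul_iInf_of_nonneg ht]

lemma ConvexOn.mul_sub_le_sub_lineMap (hf : ConvexOn ℝ univ f) (a y : E) {t : ℝ}
    (ht₀ : 0 ≤ t) (ht₁ : t ≤ 1) : t * (f a - f y) ≤ f a - f (lineMap a y t) := by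
  have := hf.2 (mem_univ a) (mem_univ y) (sub_nonneg.2 ht₁) ht₀ (sub_add_cancel 1 t)
  rw [lineMap_apply_module]
  simp only [smul_eq_mul] at this
  linarith

lemma ConvexOn.sub_le_gradMod_mul_dist (hf : ConvexOn ℝ univ f) {a : E}
    (hbdd : IsBoundedUnder (· ≤ ·) (𝓝[≠] a) fun y => |f a - f y| / dist a y) (y : E) :
    f a - f y ≤ gradMod f a * dist a y := by
  rcases eq_or_ne a y with rfl | hy
  · simp
  have hd : 0 < dist a y := dist_pos.2 hy
  have hseg : Tendsto (lineMap a y) (𝓝[>] (0 : ℝ)) (𝓝[≠] a) := by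
    refine tendsto_nhdsWithin_of_tendsto_nhds_of_eventually_within _ ?_ ?_
    · simpa using (lineMap_continuous (p := a) (q := y)).tendsto' 0 a (by simp)
        |>.mono_left nhdsWithin_le_nhds
    · filter_upwards [self_mem_nhdsWithin] with t (ht : 0 < t)
      simp [lineMap_eq_left_iff, hy, ht.ne']
  have hquot : ∀ t ∈ Ioc (0 : ℝ) 1,
      (f a - f y) / dist a y ≤ |f a - f (lineMap a y t)| / dist a (lineMap a y t) := by
    rintro t ⟨ht₀, ht₁⟩
    rw [dist_left_lineMap, Real.norm_of_nonneg ht₀.le, le_div_iff₀ (by positivity)]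
    calc (f a - f y) / dist a y * (t * dist a y) = t * (f a - f y) := by
          field_simp
      _ ≤ f a - f (lineMap a y t) := hf.mul_sub_le_sub_lineMap a y ht₀.le ht₁
      _ ≤ _ := le_abs_self _
  have : (f a - f y) / dist a y ≤ gradMod f a :=
    le_limsup_of_frequently_le
      (hseg.frequently (Eventually.frequently (mem_of_superset (Ioc_mem_nhdsGT one_pos) hquot)))
      hbdd
  rwa [div_le_iff₀ hd] at this

lemma LocallyLipschitz.isBoundedUnder_abs_sub_div_dist {X : Type*} [PseudoMetricSpace X]
    {f : X → ℝ} (hf : LocallyLipschitz f) (a : X) :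
    IsBoundedUnder (· ≤ ·) (𝓝 a) fun y => |f a - f y| / dist a y := by
  obtain ⟨K, t, ht, hK⟩ := hf a
  refine ⟨K, eventually_map.2 ?_⟩
  filter_upwards [ht] with y hy
  refine div_le_of_le_mul₀ dist_nonneg K.2 ?_
  simpa [Real.dist_eq] using hK.dist_le_mul a (mem_of_mem_nhds ht) y hy

lemma ConvexOn.sub_mul_dist_le_of_gradMod_le [FiniteDimensional ℝ E] (hf : ConvexOn ℝ univ f)
    {a : E} (ha : gradMod f a ≤ L) (y : E) : f a - L * dist a y ≤ f y := by
  have := hf.sub_le_gradMod_mul_dist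
    ((hf.locallyLipschitz.isBoundedUnder_abs_sub_div_dist a).mono nhdsWithin_le_nhds) y
  nlinarith [mul_le_mul_of_nonneg_right ha (dist_nonneg (x := a) (y := y))]

end NormedSpace

/-- **Lemma 6.2.** For a convex function `f` on `ℝⁿ` and any `L > 0`, there exists a
convex function `g` on `ℝⁿ` with `g = f` on the set `A = {x : |∇f(x)| ≤ L}` and `g`
`L`-Lipschitz on all of `ℝⁿ` (Euclidean norm). -/
theorem convex_lipschitz_extension (n : ℕ) (f : EuclideanSpace ℝ (Fin n) → ℝ)
    (hf : ConvexOn ℝ Set.univ f) (L : ℝ) (hL : 0 < L) :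
    ∃ g : EuclideanSpace ℝ (Fin n) → ℝ, ConvexOn ℝ Set.univ g ∧
      (∀ x ∈ {x : EuclideanSpace ℝ (Fin n) | gradMod f x ≤ L}, g x = f x) ∧
      LipschitzWith (Real.toNNReal L) g := by
  rcases eq_empty_or_nonempty {x | gradMod f x ≤ L} with hA | ⟨a, ha⟩
  · refine ⟨fun _ => 0, convexOn_const 0 convex_univ, by simp [hA], ?_⟩
    exact (LipschitzWith.const 0).weaken zero_le
  have hbdd := bddBelow_range_add_mul_dist_of_cone hL.le (hf.sub_mul_dist_le_of_gradMod_le ha)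
  exact ⟨lipschitzEnvelope f L, convexOn_lipschitzEnvelope hf hL.le hbdd,
    fun x hx => lipschitzEnvelope_eq_of_cone hbdd (hf.sub_mul_dist_le_of_gradMod_le hx),
    lipschitzWith_lipschitzEnvelope hbdd hL.le⟩
end
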